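/- arXiv:1502.04881 — 8 statements merged into one kernel-verified Lean document; each statement's English description precedes it below -/
import Mathlib

section
/- Let V be a real vector space, F an affine subspace, and L₀ ⊂ F a convex set. For x, y ∈ F define w(x|y) = sup{t ∈ [0,1] : t•x + (1-t)•y ∈ L₀} (with sup ∅ = 0). Then the function x ↦ 1/w(x|y) is convex on F: for x₁, x₂ ∈ F and t ∈ [0,1], 1/w(t•x₁+(1-t)•x₂ | y) ≤ t/w(x₁|y) + (1-t)/w(x₂|y), where 1/0 is interpreted as ∞. -/
open scoped ENNReal

/-- Relative robustness: `w(x|y) = sup {t ∈ [0,1] | t•x + (1-t)•y ∈ L₀}`, with `sSup ∅ = 0`. -/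
noncomputable def relRob {V : Type*} [AddCommGroup V] [Module ℝ V]
    (L₀ : Set V) (x y : V) : ℝ :=
  sSup {t : ℝ | t ∈ Set.Icc (0 : ℝ) 1 ∧ t • x + (1 - t) • y ∈ L₀}

/-- Membership of the harmonic-mean parameter in the robustness set of the convex
combination. -/
lemma relRob_aux_mem {V : Type*} [AddCommGroup V] [Module ℝ V] {L₀ : Set V}
    (hL₀ : Convex ℝ L₀) {x₁ x₂ y : V} {t r₁ r₂ : ℝ}
    (ht0 : 0 < t) (ht1 : t < 1) (hr₁0 : 0 < r₁) (hr₁1 : r₁ ≤ 1)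
    (hr₂0 : 0 < r₂) (hr₂1 : r₂ ≤ 1)
    (h₁ : r₁ • x₁ + (1 - r₁) • y ∈ L₀) (h₂ : r₂ • x₂ + (1 - r₂) • y ∈ L₀) :
    1 / (t / r₁ + (1 - t) / r₂) ∈ Set.Icc (0 : ℝ) 1 ∧
      (1 / (t / r₁ + (1 - t) / r₂)) • (t • x₁ + (1 - t) • x₂) +
        (1 - 1 / (t / r₁ + (1 - t) / r₂)) • y ∈ L₀ := by
  have h1t : 0 < 1 - t := by linarith
  have hD : 0 < t / r₁ + (1 - t) / r₂ := by positivity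
  have hD1 : 1 ≤ t / r₁ + (1 - t) / r₂ := by
    have a1 : t ≤ t / r₁ := le_div_self ht0.le hr₁0 hr₁1
    have a2 : 1 - t ≤ (1 - t) / r₂ := le_div_self h1t.le hr₂0 hr₂1
    linarith
  refine ⟨⟨by positivity, by rw [div_le_one hD]; exact hD1⟩, ?_⟩
  have hlm : (1 / (t / r₁ + (1 - t) / r₂)) * t / r₁ +
      (1 / (t / r₁ + (1 - t) / r₂)) * (1 - t) / r₂ = 1 := by
    field_simp
  have hl0 : 0 ≤ (1 / (t / r₁ + (1 - t) / r₂)) * t / r₁ := by positivity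
  have hm0 : 0 ≤ (1 / (t / r₁ + (1 - t) / r₂)) * (1 - t) / r₂ := by positivity
  have hconv := hL₀ h₁ h₂ hl0 hm0 hlm
  convert hconv using 1
  match_scalars <;> field_simp <;> ring

/-- Key real inequality: the combined robustness dominates the harmonic mean. -/
lemma relRob_aux_key {V : Type*} [AddCommGroup V] [Module ℝ V] {L₀ : Set V}
    (hL₀ : Convex ℝ L₀) {x₁ x₂ y : V} {t : ℝ}
    (ht0 : 0 < t) (ht1 : t < 1)
    (hw₁ : 0 < relRob L₀ x₁ y) (hw₂ : 0 < relRob L₀ x₂ y) :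
    1 / (t / relRob L₀ x₁ y + (1 - t) / relRob L₀ x₂ y) ≤
      relRob L₀ (t • x₁ + (1 - t) • x₂) y := by
  have h1t : 0 < 1 - t := by linarith
  have hw₁' : 0 < relRob L₀ x₁ y := hw₁
  have hw₂' : 0 < relRob L₀ x₂ y := hw₂
  have hS₁ne : {s : ℝ | s ∈ Set.Icc (0 : ℝ) 1 ∧ s • x₁ + (1 - s) • y ∈ L₀}.Nonempty := by
    by_contra h
    rw [Set.not_nonempty_iff_eq_empty] at h
    have : relRob L₀ x₁ y = 0 := by rw [relRob, h, Real.sSup_empty]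
    linarith
  have hS₂ne : {s : ℝ | s ∈ Set.Icc (0 : ℝ) 1 ∧ s • x₂ + (1 - s) • y ∈ L₀}.Nonempty := by
    by_contra h
    rw [Set.not_nonempty_iff_eq_empty] at h
    have : relRob L₀ x₂ y = 0 := by rw [relRob, h, Real.sSup_empty]
    linarith
  have hE : 0 < t / relRob L₀ x₁ y + (1 - t) / relRob L₀ x₂ y := by positivity
  refine le_of_forall_lt fun c hc => ?_
  -- choose θ ∈ (0,1) with c < θ/E
  have hcE : c * (t / relRob L₀ x₁ y + (1 - t) / relRob L₀ x₂ y) < 1 :=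
    (lt_div_iff₀ hE).mp hc
  obtain ⟨θ, hθ0, hθ1, hθc⟩ : ∃ θ : ℝ, 0 < θ ∧ θ < 1 ∧
      c * (t / relRob L₀ x₁ y + (1 - t) / relRob L₀ x₂ y) < θ := by
    refine ⟨max (1/2) ((c * (t / relRob L₀ x₁ y + (1 - t) / relRob L₀ x₂ y) + 1) / 2),
      lt_of_lt_of_le (by norm_num) (le_max_left _ _), max_lt (by norm_num) (by linarith), ?_⟩
    exact lt_of_lt_of_le (by linarith) (le_max_right _ _)
  have hc' : c < θ / (t / relRob L₀ x₁ y + (1 - t) / relRob L₀ x₂ y) :=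
    (lt_div_iff₀ hE).mpr hθc
  obtain ⟨r₁, hr₁S, hθr₁⟩ := exists_lt_of_lt_csSup hS₁ne
    (show θ * relRob L₀ x₁ y < relRob L₀ x₁ y by nlinarith)
  obtain ⟨r₂, hr₂S, hθr₂⟩ := exists_lt_of_lt_csSup hS₂ne
    (show θ * relRob L₀ x₂ y < relRob L₀ x₂ y by nlinarith)
  have hr₁0 : 0 < r₁ := lt_trans (by positivity) hθr₁
  have hr₂0 : 0 < r₂ := lt_trans (by positivity) hθr₂
  obtain ⟨hgIcc, hgL₀⟩ := relRob_aux_mem hL₀ ht0 ht1 hr₁0 hr₁S.1.2 hr₂0 hr₂S.1.2 hr₁S.2 hr₂S.2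
  have hD : 0 < t / r₁ + (1 - t) / r₂ := by positivity
  -- D ≤ E/θ
  have b1 : t / r₁ ≤ t / (θ * relRob L₀ x₁ y) := by gcongr
  have b2 : (1 - t) / r₂ ≤ (1 - t) / (θ * relRob L₀ x₂ y) := by gcongr
  have heq2 : t / (θ * relRob L₀ x₁ y) + (1 - t) / (θ * relRob L₀ x₂ y) =
      (t / relRob L₀ x₁ y + (1 - t) / relRob L₀ x₂ y) / θ := by
    field_simp
  have hDE : t / r₁ + (1 - t) / r₂ ≤
      (t / relRob L₀ x₁ y + (1 - t) / relRob L₀ x₂ y) / θ := by linarith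
  have hθD : θ * (t / r₁ + (1 - t) / r₂) ≤
      t / relRob L₀ x₁ y + (1 - t) / relRob L₀ x₂ y := by
    have := mul_le_mul_of_nonneg_left hDE hθ0.le
    have h3 : θ * ((t / relRob L₀ x₁ y + (1 - t) / relRob L₀ x₂ y) / θ) =
        t / relRob L₀ x₁ y + (1 - t) / relRob L₀ x₂ y := by
      field_simp
    linarith
  have hgc : c < 1 / (t / r₁ + (1 - t) / r₂) := by
    have : θ / (t / relRob L₀ x₁ y + (1 - t) / relRob L₀ x₂ y) ≤
        1 / (t / r₁ + (1 - t) / r₂) := by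
      rw [div_le_div_iff₀ hE hD]
      nlinarith
    linarith
  refine lt_of_lt_of_le hgc (le_csSup ⟨1, fun s hs => hs.1.2⟩ ?_)
  exact ⟨hgIcc, hgL₀⟩

theorem stmt0 {V : Type*} [AddCommGroup V] [Module ℝ V]
    (F : AffineSubspace ℝ V) (L₀ : Set V)
    (hL₀F : L₀ ⊆ (F : Set V)) (hL₀ : Convex ℝ L₀)
    (x₁ x₂ y : V) (hx₁ : x₁ ∈ F) (hx₂ : x₂ ∈ F) (hy : y ∈ F)
    (t : ℝ) (ht : t ∈ Set.Icc (0 : ℝ) 1) :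
    1 / ENNReal.ofReal (relRob L₀ (t • x₁ + (1 - t) • x₂) y) ≤
      ENNReal.ofReal t / ENNReal.ofReal (relRob L₀ x₁ y) +
      ENNReal.ofReal (1 - t) / ENNReal.ofReal (relRob L₀ x₂ y) := by
  obtain ⟨ht0, ht1⟩ := ht
  rcases eq_or_lt_of_le ht0 with h0 | h0
  · rw [← h0]
    simp
  rcases eq_or_lt_of_le ht1 with h1 | h1
  · rw [h1]
    simp
  have h1t : 0 < 1 - t := by linarith
  by_cases hw₁ : relRob L₀ x₁ y ≤ 0
  · rw [ENNReal.ofReal_eq_zero.mpr hw₁, ENNReal.div_zero (ENNReal.ofReal_pos.mpr h0).ne']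
    simp
  push_neg at hw₁
  by_cases hw₂ : relRob L₀ x₂ y ≤ 0
  · rw [ENNReal.ofReal_eq_zero.mpr hw₂, ENNReal.div_zero (ENNReal.ofReal_pos.mpr h1t).ne']
    simp
  push_neg at hw₂
  have hE : 0 < t / relRob L₀ x₁ y + (1 - t) / relRob L₀ x₂ y := by positivity
  have hkey := relRob_aux_key hL₀ h0 h1 hw₁ hw₂
  calc 1 / ENNReal.ofReal (relRob L₀ (t • x₁ + (1 - t) • x₂) y)
      ≤ 1 / ENNReal.ofReal (1 / (t / relRob L₀ x₁ y + (1 - t) / relRob L₀ x₂ y)) := by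
        rw [one_div, one_div]
        exact ENNReal.inv_le_inv.mpr (ENNReal.ofReal_le_ofReal hkey)
    _ = ENNReal.ofReal (t / relRob L₀ x₁ y + (1 - t) / relRob L₀ x₂ y) := by
        rw [one_div, one_div, ENNReal.ofReal_inv_of_pos hE, inv_inv]
    _ = ENNReal.ofReal (t / relRob L₀ x₁ y) + ENNReal.ofReal ((1 - t) / relRob L₀ x₂ y) := by
        rw [ENNReal.ofReal_add (by positivity) (by positivity)]
    _ = ENNReal.ofReal t / ENNReal.ofReal (relRob L₀ x₁ y) +
        ENNReal.ofReal (1 - t) / ENNReal.ofReal (relRob L₀ x₂ y) := by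
        rw [ENNReal.ofReal_div_of_pos hw₁, ENNReal.ofReal_div_of_pos hw₂]
end

section
/- Let V be a real vector space, F an affine subspace, L₀ ⊂ F convex, and w(x|y) = sup{t ∈ [0,1] : t•x + (1-t)•y ∈ L₀}. Fix x ∈ F. Then the function y ↦ 1/(1 - w(x|y)) is concave on L₀: for y₁, y₂ ∈ L₀ and s ∈ [0,1], 1/(1 - w(x | s•y₁+(1-s)•y₂)) ≥ s/(1-w(x|y₁)) + (1-s)/(1-w(x|y₂)). -/
open scoped ENNReal

section Aux

variable {V : Type*} [AddCommGroup V] [Module ℝ V]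

private lemma mem_relSet_zero {L₀ : Set V} (x : V) {y : V} (hy : y ∈ L₀) :
    (0:ℝ) ∈ {t : ℝ | t ∈ Set.Icc (0 : ℝ) 1 ∧ t • x + (1 - t) • y ∈ L₀} := by
  refine ⟨⟨le_refl 0, zero_le_one⟩, ?_⟩
  simpa using hy

private lemma relSet_bddAbove (L₀ : Set V) (x y : V) :
    BddAbove {t : ℝ | t ∈ Set.Icc (0 : ℝ) 1 ∧ t • x + (1 - t) • y ∈ L₀} :=
  ⟨1, fun t ht => ht.1.2⟩

private lemma relRob_nonneg {L₀ : Set V} {x y : V} (hy : y ∈ L₀) : 0 ≤ relRob L₀ x y :=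
  le_csSup (relSet_bddAbove L₀ x y) (mem_relSet_zero x hy)

private lemma relRob_le_one {L₀ : Set V} {x y : V} (hy : y ∈ L₀) : relRob L₀ x y ≤ 1 :=
  csSup_le ⟨0, mem_relSet_zero x hy⟩ fun t ht => ht.1.2

private lemma le_relRob {L₀ : Set V} {x y : V} {t : ℝ}
    (ht : t ∈ Set.Icc (0 : ℝ) 1 ∧ t • x + (1 - t) • y ∈ L₀) : t ≤ relRob L₀ x y :=
  le_csSup (relSet_bddAbove L₀ x y) ht

private lemma relRob_eq_one {L₀ : Set V} {x : V} (hx : x ∈ L₀) {y : V} (hy : y ∈ L₀) :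
    relRob L₀ x y = 1 := by
  refine le_antisymm (relRob_le_one hy) (le_relRob ⟨⟨zero_le_one, le_refl 1⟩, ?_⟩)
  simpa using hx

private lemma mem_lt_one {L₀ : Set V} {x y : V} {t : ℝ} (hxL : x ∉ L₀)
    (ht : t ∈ Set.Icc (0 : ℝ) 1 ∧ t • x + (1 - t) • y ∈ L₀) : t < 1 := by
  rcases lt_or_eq_of_le ht.1.2 with h | h
  · exact h
  · exfalso; apply hxL; have := ht.2; rw [h] at this; simpa using this

private lemma exists_mem_gt {L₀ : Set V} {x y : V} (hy : y ∈ L₀) {ε : ℝ} (hε : 0 < ε) :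
    ∃ t, (t ∈ Set.Icc (0 : ℝ) 1 ∧ t • x + (1 - t) • y ∈ L₀) ∧ relRob L₀ x y - ε < t := by
  have h : relRob L₀ x y - ε <
      sSup {t : ℝ | t ∈ Set.Icc (0 : ℝ) 1 ∧ t • x + (1 - t) • y ∈ L₀} := by
    rw [show sSup {t : ℝ | t ∈ Set.Icc (0 : ℝ) 1 ∧ t • x + (1 - t) • y ∈ L₀} = relRob L₀ x y
      from rfl]
    linarith
  obtain ⟨b, hb, hb'⟩ := exists_lt_of_lt_csSup ⟨0, mem_relSet_zero x hy⟩ h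
  exact ⟨b, hb, hb'⟩

/-- The key combination lemma. -/
private lemma combo {L₀ : Set V} (hL₀ : Convex ℝ L₀) {x y₁ y₂ : V} {t₁ t₂ s : ℝ}
    (ht₁ : t₁ ∈ Set.Icc (0 : ℝ) 1 ∧ t₁ • x + (1 - t₁) • y₁ ∈ L₀)
    (ht₂ : t₂ ∈ Set.Icc (0 : ℝ) 1 ∧ t₂ • x + (1 - t₂) • y₂ ∈ L₀)
    (h₁ : t₁ < 1) (h₂ : t₂ < 1) (hs0 : 0 ≤ s) (hs1 : s ≤ 1) :
    (1 - (s / (1 - t₁) + (1 - s) / (1 - t₂))⁻¹) ∈ Set.Icc (0 : ℝ) 1 ∧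
      (1 - (s / (1 - t₁) + (1 - s) / (1 - t₂))⁻¹) • x +
        (1 - (1 - (s / (1 - t₁) + (1 - s) / (1 - t₂))⁻¹)) • (s • y₁ + (1 - s) • y₂) ∈ L₀ := by
  have ht₁0 : 0 ≤ t₁ := ht₁.1.1
  have ht₂0 : 0 ≤ t₂ := ht₂.1.1
  have hb₁ : (0:ℝ) < 1 - t₁ := by linarith
  have hb₂ : (0:ℝ) < 1 - t₂ := by linarith
  have hD : (0:ℝ) < s * (1 - t₂) + (1 - s) * (1 - t₁) := by
    rcases eq_or_lt_of_le hs0 with h | h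
    · rw [← h]; nlinarith [hb₁]
    · have e1 := mul_pos h hb₂
      have e2 := mul_nonneg (by linarith : (0:ℝ) ≤ 1 - s) hb₁.le
      linarith
  have hDne : s * (1 - t₂) + (1 - s) * (1 - t₁) ≠ 0 := ne_of_gt hD
  have hAeq : s / (1 - t₁) + (1 - s) / (1 - t₂)
      = (s * (1 - t₂) + (1 - s) * (1 - t₁)) / ((1 - t₁) * (1 - t₂)) := by
    field_simp
  have hinv : (s / (1 - t₁) + (1 - s) / (1 - t₂))⁻¹
      = (1 - t₁) * (1 - t₂) / (s * (1 - t₂) + (1 - s) * (1 - t₁)) := by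
    rw [hAeq, inv_div]
  rw [hinv]
  have hq0 : 0 < (1 - t₁) * (1 - t₂) / (s * (1 - t₂) + (1 - s) * (1 - t₁)) := by positivity
  have hq1 : (1 - t₁) * (1 - t₂) / (s * (1 - t₂) + (1 - s) * (1 - t₁)) ≤ 1 := by
    rw [div_le_one hD]
    nlinarith [mul_nonneg (mul_nonneg hs0 ht₁0) hb₂.le,
      mul_nonneg (mul_nonneg (by linarith : (0:ℝ) ≤ 1 - s) ht₂0) hb₁.le]
  refine ⟨⟨by linarith, by linarith⟩, ?_⟩
  have hlam0 : 0 ≤ s * (1 - t₂) / (s * (1 - t₂) + (1 - s) * (1 - t₁)) := by positivity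
  have hlam1 : s * (1 - t₂) / (s * (1 - t₂) + (1 - s) * (1 - t₁)) ≤ 1 := by
    rw [div_le_one hD]
    nlinarith [mul_nonneg (by linarith : (0:ℝ) ≤ 1 - s) hb₁.le]
  have hmem := hL₀ ht₁.2 ht₂.2 hlam0 (by linarith :
      0 ≤ 1 - s * (1 - t₂) / (s * (1 - t₂) + (1 - s) * (1 - t₁))) (by ring)
  have hveq : (s * (1 - t₂) / (s * (1 - t₂) + (1 - s) * (1 - t₁))) • (t₁ • x + (1 - t₁) • y₁)
        + (1 - s * (1 - t₂) / (s * (1 - t₂) + (1 - s) * (1 - t₁))) • (t₂ • x + (1 - t₂) • y₂)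
      = (1 - (1 - t₁) * (1 - t₂) / (s * (1 - t₂) + (1 - s) * (1 - t₁))) • x +
        (1 - (1 - (1 - t₁) * (1 - t₂) / (s * (1 - t₂) + (1 - s) * (1 - t₁)))) •
          (s • y₁ + (1 - s) • y₂) := by
    match_scalars <;> · field_simp
                        ring
  rw [← hveq]
  exact hmem

/-- If the mixture's robustness is `< 1` and `0 < s`, then `relRob L₀ x y₁ < 1`. -/
private lemma aux_lt_one {L₀ : Set V} (hL₀ : Convex ℝ L₀) {x y₁ y₂ : V} (hxL : x ∉ L₀)
    (hy₁ : y₁ ∈ L₀) (hy₂ : y₂ ∈ L₀) {s : ℝ} (hs0 : 0 < s) (hs1 : s ≤ 1)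
    (hmix : relRob L₀ x (s • y₁ + (1 - s) • y₂) < 1) : relRob L₀ x y₁ < 1 := by
  by_contra hW
  push_neg at hW
  have hW1 : relRob L₀ x y₁ = 1 := le_antisymm (relRob_le_one hy₁) hW
  set W := relRob L₀ x (s • y₁ + (1 - s) • y₂) with hWdef
  have hWpos : 0 < 1 - W := by linarith
  have hε : 0 < s * (1 - W) := by positivity
  obtain ⟨t₁, ht₁, ht₁'⟩ := exists_mem_gt (x := x) hy₁ hε
  rw [hW1] at ht₁'
  have ht₁lt : t₁ < 1 := mem_lt_one hxL ht₁
  have ht₂ : (0:ℝ) ∈ Set.Icc (0:ℝ) 1 ∧ (0:ℝ) • x + ((1:ℝ) - (0:ℝ)) • y₂ ∈ L₀ :=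
    ⟨⟨le_refl 0, zero_le_one⟩, by simpa using hy₂⟩
  have hcomb := combo hL₀ ht₁ ht₂ ht₁lt (by norm_num) (le_of_lt hs0) hs1
  have hle : 1 - (s / (1 - t₁) + (1 - s) / (1 - 0))⁻¹ ≤ W := le_relRob hcomb
  have hd₁ : (0:ℝ) < 1 - t₁ := by linarith
  -- A ≥ s / (1 - t₁) > s / (s * (1 - W)) = (1 - W)⁻¹
  have h1 : s / (s * (1 - W)) < s / (1 - t₁) :=
    div_lt_div_of_pos_left hs0 hd₁ (by linarith)
  have h2 : s / (s * (1 - W)) = (1 - W)⁻¹ := by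
    field_simp
  have h3 : (1 - W)⁻¹ < s / (1 - t₁) + (1 - s) / (1 - 0) := by
    have : (0:ℝ) ≤ (1 - s) / (1 - 0) := div_nonneg (by linarith) (by norm_num)
    linarith [h2 ▸ h1]
  have h4 : (s / (1 - t₁) + (1 - s) / (1 - 0))⁻¹ < 1 - W := by
    have hinvpos : (0:ℝ) < (1 - W)⁻¹ := inv_pos.2 hWpos
    calc (s / (1 - t₁) + (1 - s) / (1 - 0))⁻¹ < ((1 - W)⁻¹)⁻¹ :=
          inv_strictAnti₀ hinvpos h3
      _ = 1 - W := inv_inv _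
  linarith

/-- The key real inequality. -/
private lemma key_real {L₀ : Set V} (hL₀ : Convex ℝ L₀) {x y₁ y₂ : V} (hxL : x ∉ L₀)
    (hy₁ : y₁ ∈ L₀) (hy₂ : y₂ ∈ L₀) {s : ℝ} (hs0 : 0 ≤ s) (hs1 : s ≤ 1)
    (hW₁ : relRob L₀ x y₁ < 1) (hW₂ : relRob L₀ x y₂ < 1)
    (hmix : relRob L₀ x (s • y₁ + (1 - s) • y₂) < 1) :
    s / (1 - relRob L₀ x y₁) + (1 - s) / (1 - relRob L₀ x y₂) ≤
      1 / (1 - relRob L₀ x (s • y₁ + (1 - s) • y₂)) := by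
  set W₁ := relRob L₀ x y₁ with hW₁def
  set W₂ := relRob L₀ x y₂ with hW₂def
  set W := relRob L₀ x (s • y₁ + (1 - s) • y₂) with hWdef
  have hW₁0 : 0 ≤ W₁ := relRob_nonneg hy₁
  have hW₂0 : 0 ≤ W₂ := relRob_nonneg hy₂
  have hWmem : s • y₁ + (1 - s) • y₂ ∈ L₀ := hL₀ hy₁ hy₂ hs0 (by linarith) (by ring)
  have hW0 : 0 ≤ W := relRob_nonneg hWmem
  have hd₁ : (0:ℝ) < 1 - W₁ := by linarith
  have hd₂ : (0:ℝ) < 1 - W₂ := by linarith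
  have hdW : (0:ℝ) < 1 - W := by linarith
  set f : ℝ → ℝ := fun ε => s / (1 - W₁ + ε) + (1 - s) / (1 - W₂ + ε) with hf
  have hcont : ContinuousAt f 0 := by
    apply ContinuousAt.add
    · exact ContinuousAt.div continuousAt_const (by fun_prop) (by simp; linarith)
    · exact ContinuousAt.div continuousAt_const (by fun_prop) (by simp; linarith)
  have hf0 : f 0 = s / (1 - W₁) + (1 - s) / (1 - W₂) := by simp [hf]
  have htend : Filter.Tendsto f (nhdsWithin 0 (Set.Ioi 0))
      (nhds (s / (1 - W₁) + (1 - s) / (1 - W₂))) := by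
    rw [← hf0]
    exact (hcont.tendsto).mono_left nhdsWithin_le_nhds
  refine le_of_tendsto htend ?_
  filter_upwards [self_mem_nhdsWithin] with ε hε
  have hεpos : 0 < ε := hε
  obtain ⟨t₁, ht₁, ht₁'⟩ := exists_mem_gt (x := x) hy₁ hεpos
  obtain ⟨t₂, ht₂, ht₂'⟩ := exists_mem_gt (x := x) hy₂ hεpos
  rw [← hW₁def] at ht₁'
  rw [← hW₂def] at ht₂'
  have ht₁lt : t₁ < 1 := mem_lt_one hxL ht₁
  have ht₂lt : t₂ < 1 := mem_lt_one hxL ht₂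
  have hcomb := combo hL₀ ht₁ ht₂ ht₁lt ht₂lt hs0 hs1
  have hle : 1 - (s / (1 - t₁) + (1 - s) / (1 - t₂))⁻¹ ≤ W := le_relRob hcomb
  have hdt₁ : (0:ℝ) < 1 - t₁ := by linarith
  have hdt₂ : (0:ℝ) < 1 - t₂ := by linarith
  -- f ε ≤ A
  have hfA₁ : s / (1 - W₁ + ε) ≤ s / (1 - t₁) :=
    div_le_div_of_nonneg_left hs0 hdt₁ (by linarith)
  have hfA₂ : (1 - s) / (1 - W₂ + ε) ≤ (1 - s) / (1 - t₂) :=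
    div_le_div_of_nonneg_left (by linarith) hdt₂ (by linarith)
  have hfε : f ε = s / (1 - W₁ + ε) + (1 - s) / (1 - W₂ + ε) := rfl
  -- f ε > 0
  have hfεpos : 0 < f ε := by
    rw [hfε]
    have e1 : s / (1 + ε) ≤ s / (1 - W₁ + ε) :=
      div_le_div_of_nonneg_left hs0 (by linarith) (by linarith)
    have e2 : (1 - s) / (1 + ε) ≤ (1 - s) / (1 - W₂ + ε) :=
      div_le_div_of_nonneg_left (by linarith) (by linarith) (by linarith)
    have e3 : (0:ℝ) < 1 / (1 + ε) := by positivity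
    have e4 : s / (1 + ε) + (1 - s) / (1 + ε) = 1 / (1 + ε) := by ring
    linarith
  have hApos : 0 < s / (1 - t₁) + (1 - s) / (1 - t₂) := by
    calc (0:ℝ) < f ε := hfεpos
      _ ≤ s / (1 - t₁) + (1 - s) / (1 - t₂) := by rw [hfε]; linarith
  -- 1 - W ≤ A⁻¹ ≤ (f ε)⁻¹
  have h5 : 1 - W ≤ (s / (1 - t₁) + (1 - s) / (1 - t₂))⁻¹ := by linarith
  have h6 : (s / (1 - t₁) + (1 - s) / (1 - t₂))⁻¹ ≤ (f ε)⁻¹ := by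
    apply inv_anti₀ hfεpos
    rw [hfε]; linarith
  have h7 : 1 - W ≤ (f ε)⁻¹ := le_trans h5 h6
  -- conclude f ε ≤ 1 / (1 - W)
  rw [le_div_iff₀ hdW]
  calc f ε * (1 - W) ≤ f ε * (f ε)⁻¹ := by
        apply mul_le_mul_of_nonneg_left h7 (le_of_lt hfεpos)
    _ = 1 := mul_inv_cancel₀ (ne_of_gt hfεpos)

end Aux

theorem stmt1 {V : Type*} [AddCommGroup V] [Module ℝ V]
    (F : AffineSubspace ℝ V) (L₀ : Set V)
    (hL₀F : L₀ ⊆ (F : Set V)) (hL₀ : Convex ℝ L₀)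
    (x : V) (hx : x ∈ F)
    (y₁ y₂ : V) (hy₁ : y₁ ∈ L₀) (hy₂ : y₂ ∈ L₀)
    (s : ℝ) (hs : s ∈ Set.Icc (0 : ℝ) 1) :
    ENNReal.ofReal s / (1 - ENNReal.ofReal (relRob L₀ x y₁)) +
      ENNReal.ofReal (1 - s) / (1 - ENNReal.ofReal (relRob L₀ x y₂)) ≤
    1 / (1 - ENNReal.ofReal (relRob L₀ x (s • y₁ + (1 - s) • y₂))) := by
  obtain ⟨hs0, hs1⟩ := hs
  have hymem : s • y₁ + (1 - s) • y₂ ∈ L₀ := hL₀ hy₁ hy₂ hs0 (by linarith) (by ring)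
  by_cases hxL : x ∈ L₀
  · rw [relRob_eq_one hxL hymem]
    simp
  rcases eq_or_lt_of_le (relRob_le_one hymem) with hmix | hmix
  · rw [hmix]
    simp
  rcases eq_or_lt_of_le hs0 with h0 | h0
  · rw [← h0]
    simp
  rcases eq_or_lt_of_le hs1 with h1 | h1
  · rw [h1]
    simp
  have hW₁ : relRob L₀ x y₁ < 1 := aux_lt_one hL₀ hxL hy₁ hy₂ h0 hs1 hmix
  have hW₂ : relRob L₀ x y₂ < 1 := by
    have hmix' : relRob L₀ x ((1 - s) • y₂ + (1 - (1 - s)) • y₁) < 1 := by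
      rw [show (1 - s) • y₂ + (1 - (1 - s)) • y₁ = s • y₁ + (1 - s) • y₂ by
        rw [sub_sub_cancel]; exact add_comm _ _]
      exact hmix
    exact aux_lt_one hL₀ hxL hy₂ hy₁ (by linarith) (by linarith) hmix'
  have hkey := key_real hL₀ hxL hy₁ hy₂ hs0 hs1 hW₁ hW₂ hmix
  have hW₁0 : 0 ≤ relRob L₀ x y₁ := relRob_nonneg hy₁
  have hW₂0 : 0 ≤ relRob L₀ x y₂ := relRob_nonneg hy₂
  have hW0 : 0 ≤ relRob L₀ x (s • y₁ + (1 - s) • y₂) := relRob_nonneg hymem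
  have e₁ : (1 : ℝ≥0∞) - ENNReal.ofReal (relRob L₀ x y₁)
      = ENNReal.ofReal (1 - relRob L₀ x y₁) := by
    rw [ENNReal.ofReal_sub _ hW₁0, ENNReal.ofReal_one]
  have e₂ : (1 : ℝ≥0∞) - ENNReal.ofReal (relRob L₀ x y₂)
      = ENNReal.ofReal (1 - relRob L₀ x y₂) := by
    rw [ENNReal.ofReal_sub _ hW₂0, ENNReal.ofReal_one]
  have e₃ : (1 : ℝ≥0∞) - ENNReal.ofReal (relRob L₀ x (s • y₁ + (1 - s) • y₂))
      = ENNReal.ofReal (1 - relRob L₀ x (s • y₁ + (1 - s) • y₂)) := by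
    rw [ENNReal.ofReal_sub _ hW0, ENNReal.ofReal_one]
  rw [e₁, e₂, e₃,
    ← ENNReal.ofReal_div_of_pos (by linarith : (0:ℝ) < 1 - relRob L₀ x y₁),
    ← ENNReal.ofReal_div_of_pos (by linarith : (0:ℝ) < 1 - relRob L₀ x y₂),
    ← ENNReal.ofReal_add (div_nonneg hs0 (by linarith)) (div_nonneg (by linarith) (by linarith)),
    show (1 : ℝ≥0∞) = ENNReal.ofReal 1 from ENNReal.ofReal_one.symm,
    ← ENNReal.ofReal_div_of_pos
      (by linarith : (0:ℝ) < 1 - relRob L₀ x (s • y₁ + (1 - s) • y₂))]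
  exact ENNReal.ofReal_le_ofReal hkey
end

section
/- Pre-processing cannot decrease the robustness of incompatibility: if (M, N) ≤_prae (A, B), i.e., M = ℰ* ∘ A and N = ℰ* ∘ B for a channel ℰ, then W(M, N) ≥ W(A, B), where W(A, B) = sup{t ∈ [0,1] : ∃ POVMs A₁, B₁ such that (t•A + (1-t)•A₁, t•B + (1-t)•B₁) is jointly measurable}. -/
open scoped ComplexOrder

open Matrix in
/-- The Choi matrix of a linear map between matrix algebras. -/
noncomputable def choi {n m : Type*} [Fintype n] [DecidableEq n] [Fintype m]
    (Φ : Matrix n n ℂ →ₗ[ℂ] Matrix m m ℂ) : Matrix (n × m) (n × m) ℂ :=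
  Matrix.of fun p q => Φ (Matrix.single p.1 q.1 1) p.2 q.2

/-- Complete positivity of a linear map between matrix algebras
(positivity of its Choi matrix). -/
def IsCP {n m : Type*} [Fintype n] [DecidableEq n] [Fintype m]
    (Φ : Matrix n n ℂ →ₗ[ℂ] Matrix m m ℂ) : Prop :=
  (choi Φ).PosSemidef

/-- Trace preservation. -/
def IsTP {n m : Type*} [Fintype n] [Fintype m]
    (Φ : Matrix n n ℂ →ₗ[ℂ] Matrix m m ℂ) : Prop :=
  ∀ ρ, (Φ ρ).trace = ρ.trace

/-- A quantum channel: a completely positive trace-preserving linear map. -/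
def IsChannel {n m : Type*} [Fintype n] [DecidableEq n] [Fintype m]
    (Φ : Matrix n n ℂ →ₗ[ℂ] Matrix m m ℂ) : Prop :=
  IsCP Φ ∧ IsTP Φ

/-- A (finite-outcome) POVM: positive operators summing to the identity. -/
def IsPOVM {n Ω : Type*} [Fintype n] [DecidableEq n] [Fintype Ω]
    (M : Ω → Matrix n n ℂ) : Prop :=
  (∀ x, (M x).PosSemidef) ∧ ∑ x, M x = 1

/-- Joint measurability of two POVMs: existence of a joint POVM with the
given marginals. -/
def JointlyMeasurable {n Ω Ω' : Type*} [Fintype n] [DecidableEq n]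
    [Fintype Ω] [Fintype Ω']
    (A : Ω → Matrix n n ℂ) (B : Ω' → Matrix n n ℂ) : Prop :=
  ∃ G : Ω × Ω' → Matrix n n ℂ, IsPOVM G ∧
    (∀ x, ∑ y, G (x, y) = A x) ∧ (∀ y, ∑ x, G (x, y) = B y)

/-- The robustness of incompatibility of a pair of POVMs. -/
noncomputable def Wrob {n Ω Ω' : Type*} [Fintype n] [DecidableEq n]
    [Fintype Ω] [Fintype Ω']
    (A : Ω → Matrix n n ℂ) (B : Ω' → Matrix n n ℂ) : ℝ :=
  sSup {t : ℝ | t ∈ Set.Icc (0 : ℝ) 1 ∧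
    ∃ A₁ : Ω → Matrix n n ℂ, ∃ B₁ : Ω' → Matrix n n ℂ,
      IsPOVM A₁ ∧ IsPOVM B₁ ∧
      JointlyMeasurable (fun x => t • A x + (1 - t) • A₁ x)
        (fun y => t • B y + (1 - t) • B₁ y)}

/-! A unital positive map sends POVMs to POVMs, commutes with taking marginals and with
mixing, so it carries every witness `(t, A₁, B₁)` for the robustness of `(A, B)` to a witness
`(t, Λ ∘ A₁, Λ ∘ B₁)` for `(Λ ∘ A, Λ ∘ B)`; the supremum can only grow. Positivity of a
completely positive `Λ` comes from a Kraus decomposition `Λ ρ = ∑ Vᴴ ρ V`. -/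

open Matrix

lemma linearMap_apply_eq_sum_choi {n m : Type*} [Fintype n] [DecidableEq n] [Fintype m]
    (Λ : Matrix n n ℂ →ₗ[ℂ] Matrix m m ℂ) (ρ : Matrix n n ℂ) (i j : m) :
    Λ ρ i j = ∑ p, ∑ q, ρ p q * choi Λ (p, i) (q, j) := by
  conv_lhs => rw [matrix_eq_sum_single ρ]
  simp only [map_sum, Matrix.sum_apply]
  refine Finset.sum_congr rfl fun p _ => Finset.sum_congr rfl fun q _ => ?_
  rw [show single p q (ρ p q) = ρ p q • single p q 1 by rw [smul_single, smul_eq_mul, mul_one],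
    _root_.map_smul, Matrix.smul_apply, smul_eq_mul]
  rfl

lemma IsCP.exists_kraus {n m : Type*} [Fintype n] [DecidableEq n] [Fintype m]
    {Λ : Matrix n n ℂ →ₗ[ℂ] Matrix m m ℂ} (h : IsCP Λ) :
    ∃ V : n × m → Matrix n m ℂ, ∀ ρ, Λ ρ = ∑ r, (V r)ᴴ * ρ * V r := by
  classical
  obtain ⟨K, hK⟩ : ∃ K : Matrix (n × m) (n × m) ℂ, choi Λ = Kᴴ * K := by
    open scoped MatrixOrder Matrix.Norms.L2Operator in
    exact CStarAlgebra.nonneg_iff_eq_star_mul_self.mp h.nonneg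
  -- the rows of a square root `K` of the Choi matrix are the Kraus operators
  refine ⟨fun r => of fun p i => K r (p, i), fun ρ => ?_⟩
  ext i j
  simp only [linearMap_apply_eq_sum_choi, hK, Matrix.sum_apply, mul_apply, conjTranspose_apply,
    of_apply, Finset.mul_sum, Finset.sum_mul]
  conv_lhs => enter [2, p]; rw [Finset.sum_comm]
  rw [Finset.sum_comm]
  refine Finset.sum_congr rfl fun r _ => ?_
  rw [Finset.sum_comm]
  exact Fintype.sum_congr _ _ fun p => Fintype.sum_congr _ _ fun q => by ring

lemma IsCP.posSemidef_map {n m : Type*} [Fintype n] [DecidableEq n] [Fintype m]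
    {Λ : Matrix n n ℂ →ₗ[ℂ] Matrix m m ℂ} (h : IsCP Λ) {ρ : Matrix n n ℂ} (hρ : ρ.PosSemidef) :
    (Λ ρ).PosSemidef := by
  obtain ⟨V, hV⟩ := h.exists_kraus
  rw [hV]
  exact posSemidef_sum _ fun r _ => hρ.conjTranspose_mul_mul_same (V r)

section PositiveUnital

variable {n k : Type*} [Fintype n] [DecidableEq n] [Fintype k] [DecidableEq k]
  {Λ : Matrix n n ℂ →ₗ[ℂ] Matrix k k ℂ}

lemma IsPOVM.map {Ω : Type*} [Fintype Ω] {M : Ω → Matrix n n ℂ} (hM : IsPOVM M)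
    (hΛ : ∀ ρ : Matrix n n ℂ, ρ.PosSemidef → (Λ ρ).PosSemidef) (hΛ1 : Λ 1 = 1) :
    IsPOVM fun x => Λ (M x) :=
  ⟨fun x => hΛ _ (hM.1 x), by rw [← map_sum, hM.2, hΛ1]⟩

lemma JointlyMeasurable.map {Ω Ω' : Type*} [Fintype Ω] [Fintype Ω']
    {A : Ω → Matrix n n ℂ} {B : Ω' → Matrix n n ℂ} (hAB : JointlyMeasurable A B)
    (hΛ : ∀ ρ : Matrix n n ℂ, ρ.PosSemidef → (Λ ρ).PosSemidef) (hΛ1 : Λ 1 = 1) :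
    JointlyMeasurable (fun x => Λ (A x)) (fun y => Λ (B y)) := by
  obtain ⟨G, hG, hGA, hGB⟩ := hAB
  exact ⟨fun p => Λ (G p), hG.map hΛ hΛ1, fun x => by rw [← map_sum, hGA],
    fun y => by rw [← map_sum, hGB]⟩

end PositiveUnital

theorem stmt10_general {n k Ω Ω' : Type*} [Fintype n] [DecidableEq n] [Fintype k] [DecidableEq k]
    [Fintype Ω] [Fintype Ω']
    (A : Ω → Matrix n n ℂ) (B : Ω' → Matrix n n ℂ)
    -- `Λ = ℰ*` is the unital completely positive dual of a channel `ℰ`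
    (Λ : Matrix n n ℂ →ₗ[ℂ] Matrix k k ℂ) (hΛcp : IsCP Λ) (hΛ1 : Λ 1 = 1) :
    Wrob A B ≤ Wrob (fun x => Λ (A x)) (fun y => Λ (B y)) := by
  have hΛ : ∀ ρ : Matrix n n ℂ, ρ.PosSemidef → (Λ ρ).PosSemidef := fun _ => hΛcp.posSemidef_map
  refine Real.sSup_le (fun t ⟨ht, A₁, B₁, hA₁, hB₁, hJM⟩ => ?_)
    (Real.sSup_nonneg fun t ht => ht.1.1)
  refine le_csSup ⟨1, fun s hs => hs.1.2⟩ ⟨ht, _, _, hA₁.map hΛ hΛ1, hB₁.map hΛ hΛ1, ?_⟩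
  simpa only [map_add, LinearMap.map_smul_of_tower] using hJM.map hΛ hΛ1

theorem stmt10 {n k Ω Ω' : Type*} [Fintype n] [DecidableEq n] [Fintype k] [DecidableEq k]
    [Fintype Ω] [Fintype Ω']
    (A : Ω → Matrix n n ℂ) (B : Ω' → Matrix n n ℂ)
    (hA : IsPOVM A) (hB : IsPOVM B)
    -- `Λ = ℰ*` is the unital completely positive dual of a channel `ℰ`
    (Λ : Matrix n n ℂ →ₗ[ℂ] Matrix k k ℂ) (hΛcp : IsCP Λ) (hΛ1 : Λ 1 = 1) :
    Wrob A B ≤ Wrob (fun x => Λ (A x)) (fun y => Λ (B y)) :=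
  stmt10_general A B Λ hΛcp hΛ1
end

section
/- Post-processing cannot decrease the robustness of incompatibility: if M̃ = A^β and Ñ = B^γ are post-processings of POVMs A, B via stochastic matrices (Markov kernels) β, γ, then W(M̃, Ñ) ≥ W(A, B). -/
open scoped ComplexOrder

/-!
If `G` is a joint POVM for `t • A + (1 - t) • A₁` and `t • B + (1 - t) • B₁`, then
post-processing `G` by the product kernel `β y x * γ y' x'` gives a joint POVM whose
marginals are the post-processings of those mixtures; since post-processing is linear, these are
the same mixtures of `A^β, A₁^β` and `B^γ, B₁^γ`. So every admissible `t` for `(A, B)` is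
admissible for `(A^β, B^γ)`.
-/

open Finset

def IsStochastic {Γ Ω : Type*} [Fintype Γ] (β : Γ → Ω → ℝ) : Prop :=
  (∀ y x, 0 ≤ β y x) ∧ ∀ x, ∑ y, β y x = 1

def postProcess {Γ Ω V : Type*} [Fintype Ω] [AddCommMonoid V] [Module ℝ V]
    (β : Γ → Ω → ℝ) (M : Ω → V) : Γ → V :=
  fun y => ∑ x, β y x • M x

def kernelProd {Γ Γ' Ω Ω' : Type*} (β : Γ → Ω → ℝ) (γ : Γ' → Ω' → ℝ) :
    Γ × Γ' → Ω × Ω' → ℝ :=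
  fun p q => β p.1 q.1 * γ p.2 q.2

section PostProcess

variable {Γ Γ' Ω Ω' V : Type*} [AddCommMonoid V] [Module ℝ V]

lemma postProcess_smul_add_smul [Fintype Ω] (β : Γ → Ω → ℝ) (M N : Ω → V) (a b : ℝ) :
    postProcess β (fun x => a • M x + b • N x) =
      fun y => a • postProcess β M y + b • postProcess β N y := by
  funext y
  simp only [postProcess, smul_add, sum_add_distrib, smul_sum, smul_smul, mul_comm]

lemma sum_postProcess [Fintype Γ] [Fintype Ω] {β : Γ → Ω → ℝ} (hβ : ∀ x, ∑ y, β y x = 1)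
    (M : Ω → V) : ∑ y, postProcess β M y = ∑ x, M x := by
  simp only [postProcess]
  rw [sum_comm]
  simp only [← sum_smul, hβ, one_smul]

lemma IsStochastic.kernelProd [Fintype Γ] [Fintype Γ'] {β : Γ → Ω → ℝ} {γ : Γ' → Ω' → ℝ}
    (hβ : IsStochastic β) (hγ : IsStochastic γ) : IsStochastic (kernelProd β γ) :=
  ⟨fun p q => mul_nonneg (hβ.1 p.1 q.1) (hγ.1 p.2 q.2), fun q => by
    simp only [_root_.kernelProd, Fintype.sum_prod_type, ← mul_sum, hγ.2, mul_one, hβ.2]⟩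

lemma sum_postProcess_kernelProd_right [Fintype Γ'] [Fintype Ω] [Fintype Ω']
    (β : Γ → Ω → ℝ) {γ : Γ' → Ω' → ℝ} (hγ : ∀ x, ∑ y, γ y x = 1) (G : Ω × Ω' → V) (y : Γ) :
    ∑ y', postProcess (kernelProd β γ) G (y, y') =
      postProcess β (fun x => ∑ x', G (x, x')) y := by
  simp only [postProcess, kernelProd]
  rw [sum_comm]
  simp only [← sum_smul, ← mul_sum, hγ, mul_one, Fintype.sum_prod_type, smul_sum]

lemma sum_postProcess_kernelProd_left [Fintype Γ] [Fintype Ω] [Fintype Ω']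
    {β : Γ → Ω → ℝ} (hβ : ∀ x, ∑ y, β y x = 1) (γ : Γ' → Ω' → ℝ) (G : Ω × Ω' → V) (y' : Γ') :
    ∑ y, postProcess (kernelProd β γ) G (y, y') =
      postProcess γ (fun x' => ∑ x, G (x, x')) y' := by
  simp only [postProcess, kernelProd]
  rw [sum_comm]
  simp only [← sum_smul, ← sum_mul, hβ, one_mul, Fintype.sum_prod_type, smul_sum]
  exact sum_comm

end PostProcess

lemma Real.sSup_le_sSup_of_nonneg {s t : Set ℝ} (hst : s ⊆ t) (ht : BddAbove t)
    (ht₀ : ∀ x ∈ t, 0 ≤ x) : sSup s ≤ sSup t := by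
  rcases s.eq_empty_or_nonempty with rfl | hs
  · exact Real.sSup_empty ▸ Real.sSup_nonneg ht₀
  · exact csSup_le_csSup ht hs hst

section POVM

variable {n Γ Γ' Ω Ω' : Type*} [Fintype n] [DecidableEq n] [Fintype Γ] [Fintype Γ']
  [Fintype Ω] [Fintype Ω']

lemma IsPOVM.postProcess {M : Ω → Matrix n n ℂ} (hM : IsPOVM M) {β : Γ → Ω → ℝ}
    (hβ : IsStochastic β) : IsPOVM (postProcess β M) :=
  ⟨fun y => Matrix.posSemidef_sum _ fun x _ => (hM.1 x).smul (hβ.1 y x),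
    by rw [sum_postProcess hβ.2, hM.2]⟩

lemma JointlyMeasurable.postProcess {A : Ω → Matrix n n ℂ} {B : Ω' → Matrix n n ℂ}
    (h : JointlyMeasurable A B) {β : Γ → Ω → ℝ} {γ : Γ' → Ω' → ℝ}
    (hβ : IsStochastic β) (hγ : IsStochastic γ) :
    JointlyMeasurable (postProcess β A) (postProcess γ B) := by
  obtain ⟨G, hG, hGA, hGB⟩ := h
  refine ⟨_root_.postProcess (kernelProd β γ) G, hG.postProcess (hβ.kernelProd hγ),
    fun y => ?_, fun y' => ?_⟩
  · rw [sum_postProcess_kernelProd_right β hγ.2, funext hGA]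
  · rw [sum_postProcess_kernelProd_left hβ.2 γ, funext hGB]

lemma Wrob_le_Wrob {A : Ω → Matrix n n ℂ} {B : Ω' → Matrix n n ℂ}
    {C : Γ → Matrix n n ℂ} {D : Γ' → Matrix n n ℂ}
    (h : ∀ t ∈ Set.Icc (0 : ℝ) 1, ∀ A₁ B₁, IsPOVM A₁ → IsPOVM B₁ →
      JointlyMeasurable (fun x => t • A x + (1 - t) • A₁ x)
        (fun y => t • B y + (1 - t) • B₁ y) →
      ∃ C₁ D₁, IsPOVM C₁ ∧ IsPOVM D₁ ∧
        JointlyMeasurable (fun x => t • C x + (1 - t) • C₁ x)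
          (fun y => t • D y + (1 - t) • D₁ y)) :
    Wrob A B ≤ Wrob C D :=
  Real.sSup_le_sSup_of_nonneg (fun t ⟨ht, A₁, B₁, hA₁, hB₁, hJ⟩ => ⟨ht, h t ht A₁ B₁ hA₁ hB₁ hJ⟩)
    ⟨1, fun _ ht => ht.1.2⟩ fun _ ht => ht.1.1

lemma Wrob_le_Wrob_postProcess (A : Ω → Matrix n n ℂ) (B : Ω' → Matrix n n ℂ)
    {β : Γ → Ω → ℝ} {γ : Γ' → Ω' → ℝ} (hβ : IsStochastic β) (hγ : IsStochastic γ) :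
    Wrob A B ≤ Wrob (postProcess β A) (postProcess γ B) := by
  refine Wrob_le_Wrob fun t _ A₁ B₁ hA₁ hB₁ hJ => ⟨postProcess β A₁, postProcess γ B₁,
    hA₁.postProcess hβ, hB₁.postProcess hγ, ?_⟩
  simpa only [postProcess_smul_add_smul] using hJ.postProcess hβ hγ

end POVM

theorem stmt11_general {n Ω Ω' Γ Γ' : Type*} [Fintype n] [DecidableEq n]
    [Fintype Ω] [Fintype Ω'] [Fintype Γ] [Fintype Γ']
    (A : Ω → Matrix n n ℂ) (B : Ω' → Matrix n n ℂ)
    -- Markov kernels (stochastic matrices) β, γ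
    (β : Γ → Ω → ℝ) (γ : Γ' → Ω' → ℝ)
    (hβ : (∀ y x, 0 ≤ β y x) ∧ ∀ x, ∑ y, β y x = 1)
    (hγ : (∀ y x, 0 ≤ γ y x) ∧ ∀ x, ∑ y, γ y x = 1) :
    Wrob A B ≤
      Wrob (fun y => ∑ x, β y x • A x) (fun y => ∑ x, γ y x • B x) :=
  Wrob_le_Wrob_postProcess A B hβ hγ

theorem stmt11 {n Ω Ω' Γ Γ' : Type*} [Fintype n] [DecidableEq n]
    [Fintype Ω] [Fintype Ω'] [Fintype Γ] [Fintype Γ']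
    (A : Ω → Matrix n n ℂ) (B : Ω' → Matrix n n ℂ)
    (hA : IsPOVM A) (hB : IsPOVM B)
    -- Markov kernels (stochastic matrices) β, γ
    (β : Γ → Ω → ℝ) (γ : Γ' → Ω' → ℝ)
    (hβ : (∀ y x, 0 ≤ β y x) ∧ ∀ x, ∑ y, β y x = 1)
    (hγ : (∀ y x, 0 ≤ γ y x) ∧ ∀ x, ∑ y, γ y x = 1) :
    Wrob A B ≤
      Wrob (fun y => ∑ x, β y x • A x) (fun y => ∑ x, γ y x • B x) :=
  stmt11_general A B β γ hβ hγ
end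

section
/- Let ℋ be a d-dimensional Hilbert space with orthonormal bases {φ_j} and {ψ_k = ℱ*φ_k} related by the finite Fourier transform, Q_j = |φ_j⟩⟨φ_j|, P_k = |ψ_k⟩⟨ψ_k|. A Weyl-covariant observable pair (μ*Q, ν*P), where (μ*Q)_j = Σ_q μ_{j-q} Q_q and (ν*P)_k = Σ_p ν_{k-p} P_p for probability distributions μ, ν on ℤ_d, is jointly measurable if and only if there exists a state ρ ∈ S(ℋ) with μ_j = tr[ρ Q_{-j}] and ν_k = tr[ρ P_{-k}] for all j, k ∈ ℤ_d. -/
open scoped ComplexOrder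

/-- The character `m ↦ e^{2πi m/d}` of `ℤ_d`. -/
noncomputable def chi (d : ℕ) [NeZero d] (m : ZMod d) : ℂ :=
  Complex.exp (2 * Real.pi * Complex.I * (m.val : ℂ) / d)

/-- The rank-1 sharp observable `Q_j = |φ_j⟩⟨φ_j|` in the standard basis. -/
noncomputable def Qobs (d : ℕ) [NeZero d] (j : ZMod d) : Matrix (ZMod d) (ZMod d) ℂ :=
  Matrix.single j j 1

/-- The Fourier-conjugate rank-1 sharp observable `P_k = |ψ_k⟩⟨ψ_k|`,
where `ψ_k = ℱ*φ_k`. -/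
noncomputable def Pobs (d : ℕ) [NeZero d] (k : ZMod d) : Matrix (ZMod d) (ZMod d) ℂ :=
  Matrix.of fun i j => chi d ((i - j) * k) / d

/-!
The Weyl operators `W(q,p)` act covariantly on both sharp observables:
`W(q,p) Q_m W(q,p)* = Q_{m+q}` and `W(q,p) P_m W(q,p)* = P_{m+p}`.

Given a state `ρ`, the phase-space POVM `G(q,p) = d⁻¹ W(q,p) ρ W(q,p)*` has the required
marginals: summing over `p` leaves a diagonal matrix, summing over `q` a circulant one, i.e. one
that is diagonal in the Fourier basis `{ψ_k}`, and in both cases covariance identifies the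
diagonal entries with `tr[ρ Q_{-j}] = μ_j` and `tr[ρ P_{-k}] = ν_k`. Conversely, averaging a
joint POVM `G` as `ρ = d⁻¹ Σ_{q,p} W(q,p)* G(q,p) W(q,p)` produces a state, and covariance
together with the marginal conditions gives `tr[ρ Q_{-j}] = μ_j` and `tr[ρ P_{-k}] = ν_k`.
-/

open Matrix ZMod

namespace WeylCovariance

variable {d : ℕ} [NeZero d]

lemma trace_conj_mul {n R : Type*} [Fintype n] [CommSemiring R] (A X B M : Matrix n n R) :
    (A * X * B * M).trace = (X * (B * M * A)).trace := by
  rw [Matrix.mul_assoc, Matrix.mul_assoc, trace_mul_comm, Matrix.mul_assoc, Matrix.mul_assoc]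

lemma trace_sum_smul_mul_of_trace_mul_eq_ite {n ι R : Type*} [Fintype n] [Fintype ι]
    [DecidableEq ι] [CommSemiring R] (E : ι → Matrix n n R)
    (hE : ∀ t m, (E t * E m).trace = if t = m then 1 else 0) (c : ι → R) (m : ι) :
    ((∑ t, c t • E t) * E m).trace = c m := by
  simp [Finset.sum_mul, trace_sum, smul_mul_assoc, trace_smul, hE]

lemma inv_card_mul_sum_const (a : ℂ) : (d : ℂ)⁻¹ * ∑ _ : ZMod d, a = a := by
  rw [Finset.sum_const, Finset.card_univ, ZMod.card, nsmul_eq_mul, ← mul_assoc,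
    inv_mul_cancel₀ (NeZero.ne (d : ℂ)), one_mul]

lemma chi_eq_stdAddChar (m : ZMod d) : chi d m = stdAddChar m := by
  rw [stdAddChar_apply, toCircle_apply, chi]

lemma stdAddChar_mul_star (a b : ZMod d) :
    stdAddChar a * star (stdAddChar b) = stdAddChar (a - b) := by
  rw [sub_eq_add_neg, AddChar.map_add_eq_mul, AddChar.map_neg_eq_conj, Complex.star_def]

lemma Pobs_apply (k i j : ZMod d) : Pobs d k i j = stdAddChar ((i - j) * k) / d := by
  rw [Pobs, of_apply, chi_eq_stdAddChar]

lemma Pobs_eq_circulant (k : ZMod d) :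
    Pobs d k = circulant fun c => stdAddChar (c * k) / d := by
  ext i j
  rw [Pobs_apply, circulant_apply]

lemma trace_Qobs_mul_Qobs (t m : ZMod d) :
    (Qobs d t * Qobs d m).trace = if t = m then 1 else 0 := by
  split_ifs with h <;> simp [Qobs, h]

lemma sum_Qobs : ∑ t, Qobs d t = 1 :=
  sum_single_one

lemma sum_Qobs_sub (m : ZMod d) : ∑ q, Qobs d (m - q) = 1 :=
  (Fintype.sum_equiv (Equiv.subLeft m) _ _ fun _ => rfl).trans sum_Qobs

lemma trace_diagonal_mul_Qobs (v : ZMod d → ℂ) (m : ZMod d) :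
    (diagonal v * Qobs d m).trace = v m := by
  simp [Qobs, trace, diagonal_mul, single_apply]

lemma diagonal_eq_sum_trace_mul_Qobs_smul (v : ZMod d → ℂ) :
    diagonal v = ∑ m, (diagonal v * Qobs d m).trace • Qobs d m := by
  simp_rw [trace_diagonal_mul_Qobs, Qobs, smul_single, smul_eq_mul, mul_one]
  exact (sum_single_eq_diagonal v).symm

lemma trace_circulant_mul_Pobs (v : ZMod d → ℂ) (m : ZMod d) :
    (circulant v * Pobs d m).trace = 𝓕 v m := by
  simp only [trace, diag, mul_apply, circulant_apply, Pobs_apply, dft_apply, smul_eq_mul]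
  have inner (i : ZMod d) : ∑ j, v (i - j) * (stdAddChar ((j - i) * m) / d)
      = (∑ c, stdAddChar (-(c * m)) * v c) / d := by
    rw [Finset.sum_div]
    refine Fintype.sum_equiv (Equiv.subLeft i) _ _ fun j => ?_
    rw [Equiv.subLeft_apply, neg_mul_eq_neg_mul, neg_sub, mul_div_assoc', mul_comm]
  rw [Finset.sum_congr rfl fun i _ => inner i, Finset.sum_const, Finset.card_univ, ZMod.card,
    nsmul_eq_mul, mul_div_cancel₀ _ (NeZero.ne (d : ℂ))]

lemma circulant_eq_sum_dft_smul_Pobs (v : ZMod d → ℂ) :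
    circulant v = ∑ m, 𝓕 v m • Pobs d m := by
  ext i j
  rw [circulant_apply, Matrix.sum_apply, ← LinearEquiv.symm_apply_apply dft v, invDFT_apply,
    LinearEquiv.apply_symm_apply, smul_eq_mul, Finset.mul_sum]
  refine Finset.sum_congr rfl fun m _ => ?_
  rw [Matrix.smul_apply, Pobs_apply, smul_eq_mul, smul_eq_mul, mul_comm m]
  ring

lemma circulant_eq_sum_trace_mul_Pobs_smul (v : ZMod d → ℂ) :
    circulant v = ∑ m, (circulant v * Pobs d m).trace • Pobs d m := by
  simp_rw [trace_circulant_mul_Pobs]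
  exact circulant_eq_sum_dft_smul_Pobs v

lemma trace_Pobs_mul_Pobs (t m : ZMod d) :
    (Pobs d t * Pobs d m).trace = if t = m then 1 else 0 := by
  rw [Pobs_eq_circulant t, trace_circulant_mul_Pobs, dft_apply]
  have term (c : ZMod d) : stdAddChar (-(c * m)) • (stdAddChar (c * t) / d)
      = stdAddChar (c * (t - m)) / d := by
    rw [smul_eq_mul, mul_div_assoc', ← AddChar.map_add_eq_mul, mul_sub, neg_add_eq_sub]
  simp_rw [term, ← Finset.sum_div, AddChar.sum_mulShift _ (isPrimitive_stdAddChar d), sub_eq_zero,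
    ZMod.card]
  split_ifs
  · exact div_self (NeZero.ne (d : ℂ))
  · rw [Nat.cast_zero, zero_div]

lemma trace_sum_smul_Qobs_mul_Qobs (c : ZMod d → ℝ) (m : ZMod d) :
    ((∑ t, c t • Qobs d t) * Qobs d m).trace = c m := by
  simp_rw [← Complex.coe_smul]
  exact trace_sum_smul_mul_of_trace_mul_eq_ite _ trace_Qobs_mul_Qobs _ m

lemma trace_sum_smul_Pobs_mul_Pobs (c : ZMod d → ℝ) (m : ZMod d) :
    ((∑ t, c t • Pobs d t) * Pobs d m).trace = c m := by
  simp_rw [← Complex.coe_smul]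
  exact trace_sum_smul_mul_of_trace_mul_eq_ite _ trace_Pobs_mul_Pobs _ m

/-- `W(q,p) φ_j = e^{2πi p(j+q)/d} φ_{j+q}`. -/
noncomputable def weyl (q p : ZMod d) : Matrix (ZMod d) (ZMod d) ℂ :=
  of fun i j => if j = i - q then stdAddChar (p * i) else 0

lemma weyl_mul_conjTranspose_weyl (q p : ZMod d) : weyl q p * (weyl q p)ᴴ = 1 := by
  ext i j
  simp only [weyl, mul_apply, conjTranspose_apply, of_apply, apply_ite star, star_zero, mul_ite,
    mul_zero, ite_mul, zero_mul, Finset.sum_ite_eq', Finset.mem_univ, if_true, sub_left_inj,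
    one_apply, eq_comm (a := j), stdAddChar_mul_star]
  split_ifs with h
  · rw [h, sub_self, AddChar.map_zero_eq_one]
  · rfl

lemma conjTranspose_weyl_mul_weyl (q p : ZMod d) : (weyl q p)ᴴ * weyl q p = 1 :=
  mul_eq_one_comm.mp (weyl_mul_conjTranspose_weyl q p)

lemma weyl_mul_mul_conjTranspose_weyl_apply (q p : ZMod d) (X : Matrix (ZMod d) (ZMod d) ℂ)
    (i j : ZMod d) :
    (weyl q p * X * (weyl q p)ᴴ) i j = stdAddChar (p * (i - j)) * X (i - q) (j - q) := by
  simp only [weyl, mul_apply, conjTranspose_apply, of_apply, apply_ite star, star_zero, mul_ite,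
    mul_zero, ite_mul, zero_mul, Finset.sum_ite_eq', Finset.mem_univ, if_true]
  rw [mul_right_comm, stdAddChar_mul_star, mul_sub]

lemma conjTranspose_weyl_mul_conj_mul_weyl (q p : ZMod d) (X : Matrix (ZMod d) (ZMod d) ℂ) :
    (weyl q p)ᴴ * (weyl q p * X * (weyl q p)ᴴ) * weyl q p = X := by
  simp only [← Matrix.mul_assoc, conjTranspose_weyl_mul_weyl, Matrix.one_mul]
  rw [Matrix.mul_assoc, conjTranspose_weyl_mul_weyl, Matrix.mul_one]

lemma weyl_mul_Qobs_mul_conjTranspose_weyl (q p m : ZMod d) :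
    weyl q p * Qobs d m * (weyl q p)ᴴ = Qobs d (m + q) := by
  ext i j
  rw [weyl_mul_mul_conjTranspose_weyl_apply, Qobs, Qobs, single_apply, single_apply]
  simp only [← eq_sub_iff_add_eq]
  split_ifs with h
  · rw [sub_left_inj.mp (h.1.symm.trans h.2), sub_self, mul_zero, AddChar.map_zero_eq_one,
      mul_one]
  · rw [mul_zero]

lemma weyl_mul_Pobs_mul_conjTranspose_weyl (q p m : ZMod d) :
    weyl q p * Pobs d m * (weyl q p)ᴴ = Pobs d (m + p) := by
  ext i j
  rw [weyl_mul_mul_conjTranspose_weyl_apply, Pobs_apply, Pobs_apply, sub_sub_sub_cancel_right,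
    mul_div_assoc', ← AddChar.map_add_eq_mul, mul_comm p, ← mul_add, add_comm p]

lemma conjTranspose_weyl_mul_Qobs_mul_weyl (q p m : ZMod d) :
    (weyl q p)ᴴ * Qobs d m * weyl q p = Qobs d (m - q) := by
  rw [← conjTranspose_weyl_mul_conj_mul_weyl q p (Qobs d (m - q)),
    weyl_mul_Qobs_mul_conjTranspose_weyl, sub_add_cancel]

lemma conjTranspose_weyl_mul_Pobs_mul_weyl (q p m : ZMod d) :
    (weyl q p)ᴴ * Pobs d m * weyl q p = Pobs d (m - p) := by
  rw [← conjTranspose_weyl_mul_conj_mul_weyl q p (Pobs d (m - p)),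
    weyl_mul_Pobs_mul_conjTranspose_weyl, sub_add_cancel]

lemma sum_weyl_conj_snd (q : ZMod d) (X : Matrix (ZMod d) (ZMod d) ℂ) :
    ∑ p, weyl q p * X * (weyl q p)ᴴ = diagonal fun i => d * X (i - q) (i - q) := by
  ext i j
  simp_rw [Matrix.sum_apply, weyl_mul_mul_conjTranspose_weyl_apply, ← Finset.sum_mul,
    AddChar.sum_mulShift _ (isPrimitive_stdAddChar d), diagonal_apply, sub_eq_zero, ZMod.card]
  split_ifs with h
  · rw [h]
  · rw [Nat.cast_zero, zero_mul]

lemma sum_weyl_conj_fst (p : ZMod d) (X : Matrix (ZMod d) (ZMod d) ℂ) :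
    ∑ q, weyl q p * X * (weyl q p)ᴴ
      = circulant fun c => stdAddChar (p * c) * ∑ a, X (a + c) a := by
  ext i j
  simp_rw [Matrix.sum_apply, weyl_mul_mul_conjTranspose_weyl_apply, ← Finset.mul_sum,
    circulant_apply]
  congr 1
  refine Fintype.sum_equiv (Equiv.subLeft j) _ _ fun q => ?_
  rw [Equiv.subLeft_apply, sub_add_sub_cancel']

noncomputable def weylPOVM (X : Matrix (ZMod d) (ZMod d) ℂ) (x : ZMod d × ZMod d) :
    Matrix (ZMod d) (ZMod d) ℂ :=
  (d : ℂ)⁻¹ • (weyl x.1 x.2 * X * (weyl x.1 x.2)ᴴ)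

lemma trace_weylPOVM_mul (X M : Matrix (ZMod d) (ZMod d) ℂ) (x : ZMod d × ZMod d) :
    (weylPOVM X x * M).trace = (d : ℂ)⁻¹ * (X * ((weyl x.1 x.2)ᴴ * M * weyl x.1 x.2)).trace := by
  rw [weylPOVM, smul_mul_assoc, trace_smul, trace_conj_mul, smul_eq_mul]

lemma sum_snd_weylPOVM (X : Matrix (ZMod d) (ZMod d) ℂ) (q : ZMod d) :
    ∑ p, weylPOVM X (q, p) = ∑ m, (X * Qobs d (m - q)).trace • Qobs d m := by
  have hdiag :
      ∑ p, weylPOVM X (q, p) = diagonal ((d : ℂ)⁻¹ • fun i => d * X (i - q) (i - q)) := by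
    rw [diagonal_smul, ← sum_weyl_conj_snd, Finset.smul_sum]
    rfl
  conv_lhs => rw [hdiag, diagonal_eq_sum_trace_mul_Qobs_smul, ← hdiag]
  refine Finset.sum_congr rfl fun m _ => ?_
  simp_rw [Finset.sum_mul, trace_sum, trace_weylPOVM_mul, conjTranspose_weyl_mul_Qobs_mul_weyl,
    ← Finset.mul_sum, inv_card_mul_sum_const]

lemma sum_fst_weylPOVM (X : Matrix (ZMod d) (ZMod d) ℂ) (p : ZMod d) :
    ∑ q, weylPOVM X (q, p) = ∑ m, (X * Pobs d (m - p)).trace • Pobs d m := by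
  have hcirc : ∑ q, weylPOVM X (q, p)
      = circulant ((d : ℂ)⁻¹ • fun c => stdAddChar (p * c) * ∑ a, X (a + c) a) := by
    rw [circulant_smul, ← sum_weyl_conj_fst, Finset.smul_sum]
    rfl
  conv_lhs => rw [hcirc, circulant_eq_sum_trace_mul_Pobs_smul, ← hcirc]
  refine Finset.sum_congr rfl fun m _ => ?_
  simp_rw [Finset.sum_mul, trace_sum, trace_weylPOVM_mul, conjTranspose_weyl_mul_Pobs_mul_weyl,
    ← Finset.mul_sum, inv_card_mul_sum_const]

lemma sum_weylPOVM (X : Matrix (ZMod d) (ZMod d) ℂ) : ∑ x, weylPOVM X x = X.trace • 1 := by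
  rw [Fintype.sum_prod_type, Finset.sum_congr rfl fun q _ => sum_snd_weylPOVM X q,
    Finset.sum_comm]
  simp_rw [← Finset.sum_smul, ← trace_sum, ← Finset.mul_sum, sum_Qobs_sub, Matrix.mul_one,
    ← Finset.smul_sum]
  rw [sum_Qobs]

lemma isPOVM_weylPOVM {ρ : Matrix (ZMod d) (ZMod d) ℂ} (hρ : ρ.PosSemidef) (htr : ρ.trace = 1) :
    IsPOVM (weylPOVM ρ) :=
  ⟨fun _ => (hρ.mul_mul_conjTranspose_same _).smul (inv_nonneg.mpr (Nat.cast_nonneg d)),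
    by rw [sum_weylPOVM, htr, one_smul]⟩

noncomputable def weylTwirl (G : ZMod d × ZMod d → Matrix (ZMod d) (ZMod d) ℂ) :
    Matrix (ZMod d) (ZMod d) ℂ :=
  (d : ℂ)⁻¹ • ∑ x, (weyl x.1 x.2)ᴴ * G x * weyl x.1 x.2

lemma posSemidef_weylTwirl {G : ZMod d × ZMod d → Matrix (ZMod d) (ZMod d) ℂ}
    (hG : ∀ x, (G x).PosSemidef) : (weylTwirl G).PosSemidef :=
  (posSemidef_sum _ fun x _ => (hG x).conjTranspose_mul_mul_same _).smul
    (inv_nonneg.mpr (Nat.cast_nonneg d))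

lemma trace_weylTwirl (G : ZMod d × ZMod d → Matrix (ZMod d) (ZMod d) ℂ) :
    (weylTwirl G).trace = (d : ℂ)⁻¹ * (∑ x, G x).trace := by
  simp_rw [weylTwirl, trace_smul, trace_sum, trace_mul_cycle _ (G _), weyl_mul_conjTranspose_weyl,
    Matrix.one_mul, smul_eq_mul]

lemma trace_weylTwirl_mul_Qobs (G : ZMod d × ZMod d → Matrix (ZMod d) (ZMod d) ℂ) (m : ZMod d) :
    (weylTwirl G * Qobs d m).trace
      = (d : ℂ)⁻¹ * ∑ q, ((∑ p, G (q, p)) * Qobs d (m + q)).trace := by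
  simp_rw [weylTwirl, smul_mul_assoc, trace_smul, Finset.sum_mul, trace_sum, trace_conj_mul,
    weyl_mul_Qobs_mul_conjTranspose_weyl, Fintype.sum_prod_type, smul_eq_mul]

lemma trace_weylTwirl_mul_Pobs (G : ZMod d × ZMod d → Matrix (ZMod d) (ZMod d) ℂ) (m : ZMod d) :
    (weylTwirl G * Pobs d m).trace
      = (d : ℂ)⁻¹ * ∑ p, ((∑ q, G (q, p)) * Pobs d (m + p)).trace := by
  simp_rw [weylTwirl, smul_mul_assoc, trace_smul, Finset.sum_mul, trace_sum, trace_conj_mul,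
    weyl_mul_Pobs_mul_conjTranspose_weyl, Fintype.sum_prod_type_right, smul_eq_mul]

theorem exists_state_of_jointlyMeasurable {μ ν : ZMod d → ℝ}
    (h : JointlyMeasurable (fun j => ∑ q, μ (j - q) • Qobs d q)
      (fun k => ∑ p, ν (k - p) • Pobs d p)) :
    ∃ ρ : Matrix (ZMod d) (ZMod d) ℂ, ρ.PosSemidef ∧ ρ.trace = 1 ∧
      (∀ j, (ρ * Qobs d (-j)).trace = (μ j : ℂ)) ∧ (∀ k, (ρ * Pobs d (-k)).trace = (ν k : ℂ)) := by
  obtain ⟨G, ⟨hG_psd, hG_sum⟩, hGQ, hGP⟩ := h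
  refine ⟨weylTwirl G, posSemidef_weylTwirl hG_psd, ?_, fun j => ?_, fun k => ?_⟩
  · rw [trace_weylTwirl, hG_sum, trace_one, ZMod.card, inv_mul_cancel₀ (NeZero.ne (d : ℂ))]
  · have hq (q : ZMod d) : ((∑ p, G (q, p)) * Qobs d (-j + q)).trace = μ j := by
      rw [hGQ q, trace_sum_smul_Qobs_mul_Qobs (fun t => μ (q - t)), sub_add_cancel_right, neg_neg]
    rw [trace_weylTwirl_mul_Qobs, Finset.sum_congr rfl fun q _ => hq q, inv_card_mul_sum_const]
  · have hp (p : ZMod d) : ((∑ q, G (q, p)) * Pobs d (-k + p)).trace = ν k := by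
      rw [hGP p, trace_sum_smul_Pobs_mul_Pobs (fun t => ν (p - t)), sub_add_cancel_right, neg_neg]
    rw [trace_weylTwirl_mul_Pobs, Finset.sum_congr rfl fun p _ => hp p, inv_card_mul_sum_const]

theorem jointlyMeasurable_of_state {μ ν : ZMod d → ℝ} {ρ : Matrix (ZMod d) (ZMod d) ℂ}
    (hρ : ρ.PosSemidef) (htr : ρ.trace = 1) (hμ : ∀ j, (ρ * Qobs d (-j)).trace = (μ j : ℂ))
    (hν : ∀ k, (ρ * Pobs d (-k)).trace = (ν k : ℂ)) :
    JointlyMeasurable (fun j => ∑ q, μ (j - q) • Qobs d q)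
      (fun k => ∑ p, ν (k - p) • Pobs d p) := by
  refine ⟨weylPOVM ρ, isPOVM_weylPOVM hρ htr, fun q => ?_, fun p => ?_⟩
  · rw [sum_snd_weylPOVM]
    refine Finset.sum_congr rfl fun t _ => ?_
    rw [← neg_sub, hμ, Complex.coe_smul]
  · rw [sum_fst_weylPOVM]
    refine Finset.sum_congr rfl fun m _ => ?_
    rw [← neg_sub, hν, Complex.coe_smul]

end WeylCovariance

theorem stmt13_general (d : ℕ) [NeZero d] (μ ν : ZMod d → ℝ) :
    JointlyMeasurable
        (fun j => ∑ q, μ (j - q) • Qobs d q)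
        (fun k => ∑ p, ν (k - p) • Pobs d p) ↔
      ∃ ρ : Matrix (ZMod d) (ZMod d) ℂ, ρ.PosSemidef ∧ ρ.trace = 1 ∧
        (∀ j, (ρ * Qobs d (-j)).trace = (μ j : ℂ)) ∧
        (∀ k, (ρ * Pobs d (-k)).trace = (ν k : ℂ)) :=
  ⟨WeylCovariance.exists_state_of_jointlyMeasurable,
    fun ⟨_, hρ, htr, hμ, hν⟩ => WeylCovariance.jointlyMeasurable_of_state hρ htr hμ hν⟩

theorem stmt13 (d : ℕ) [NeZero d] (μ ν : ZMod d → ℝ)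
    (hμ : (∀ j, 0 ≤ μ j) ∧ ∑ j, μ j = 1)
    (hν : (∀ k, 0 ≤ ν k) ∧ ∑ k, ν k = 1) :
    JointlyMeasurable
        (fun j => ∑ q, μ (j - q) • Qobs d q)
        (fun k => ∑ p, ν (k - p) • Pobs d p) ↔
      ∃ ρ : Matrix (ZMod d) (ZMod d) ℂ, ρ.PosSemidef ∧ ρ.trace = 1 ∧
        (∀ j, (ρ * Qobs d (-j)).trace = (μ j : ℂ)) ∧
        (∀ k, (ρ * Pobs d (-k)).trace = (ν k : ℂ)) :=
  stmt13_general d μ ν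
end

section
/- For t = (1/2)(1 + 1/√d), let M = μ*Q and N = ν*P with μ_0 = ν_0 = 0 and μ_j = ν_j = 1/(d-1) for j ≠ 0. Then the POVM pair (t•Q + (1-t)•M, t•P + (1-t)•N) is jointly measurable. That is, the pair ((tδ+(1-t)μ)*Q, (tδ+(1-t)ν)*P) admits a joint POVM, witnessed by the state ρ = |η⟩⟨η| with η = √(√d/(2(√d+1)))·(φ₀ + ψ₀) satisfying tr[ρQ_{-j}] = tδ_j + (1-t)μ_j and tr[ρP_{-k}] = tδ_k + (1-t)ν_k. -/
open scoped ComplexOrder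

/-- The critical weight `t = (1 + 1/√d)/2`. -/
noncomputable def tcrit (d : ℕ) : ℝ := (1 + 1 / Real.sqrt d) / 2

/-- The uniform-off-origin noise distribution: `μ₀ = 0`, `μ_j = 1/(d-1)` for `j ≠ 0`. -/
noncomputable def noiseDist (d : ℕ) [NeZero d] (j : ZMod d) : ℝ :=
  if j = 0 then 0 else 1 / ((d : ℝ) - 1)

/-- The optimal purification vector `η = √(√d/(2(√d+1)))·(φ₀ + ψ₀)`. -/
noncomputable def etaVec (d : ℕ) [NeZero d] : ZMod d → ℂ :=
  fun i => ((Real.sqrt (Real.sqrt d / (2 * (Real.sqrt d + 1))) : ℝ) : ℂ) *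
    ((if i = 0 then 1 else 0) + ((Real.sqrt d : ℂ))⁻¹)


namespace Aux15

variable (d : ℕ) [NeZero d]

/-! ### Character lemmas -/

noncomputable def zeta : ℂ := Complex.exp (2 * Real.pi * Complex.I / d)

lemma chi_eq_pow (m : ZMod d) : chi d m = zeta d ^ m.val := by
  rw [zeta, ← Complex.exp_nat_mul, chi]
  ring_nf

lemma zeta_pow_d : zeta d ^ d = 1 := by
  rw [zeta, ← Complex.exp_nat_mul]
  have hd : (d : ℂ) ≠ 0 := Nat.cast_ne_zero.mpr (NeZero.ne d)
  rw [show (d : ℂ) * (2 * Real.pi * Complex.I / d) = 2 * Real.pi * Complex.I by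
    field_simp]
  simpa using Complex.exp_int_mul_two_pi_mul_I 1

lemma zeta_pow_mod (n : ℕ) : zeta d ^ (n % d) = zeta d ^ n := by
  conv_rhs => rw [← Nat.div_add_mod n d]
  rw [pow_add, pow_mul, zeta_pow_d, one_pow, one_mul]

lemma chi_add (a b : ZMod d) : chi d (a + b) = chi d a * chi d b := by
  rw [chi_eq_pow, chi_eq_pow, chi_eq_pow, ← pow_add, ZMod.val_add, zeta_pow_mod]

lemma chi_zero : chi d 0 = 1 := by
  simp [chi]

lemma chi_mul_conj_self (a : ZMod d) : chi d a * (starRingEnd ℂ) (chi d a) = 1 := by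
  rw [chi, ← Complex.exp_conj, ← Complex.exp_add]
  rw [show (starRingEnd ℂ) (2 * Real.pi * Complex.I * (a.val : ℂ) / d)
      = -(2 * Real.pi * Complex.I * (a.val : ℂ) / d) by
    simp only [map_div₀, map_mul, map_ofNat, Complex.conj_I, Complex.conj_natCast,
      Complex.conj_ofReal, map_natCast]; ring]
  simp

lemma chi_mul_conj (a b : ZMod d) :
    chi d a * (starRingEnd ℂ) (chi d b) = chi d (a - b) := by
  have h := chi_add d (a - b) b
  rw [sub_add_cancel] at h
  rw [h, mul_assoc, chi_mul_conj_self, mul_one]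

lemma sum_val (f : ℕ → ℂ) : ∑ m : ZMod d, f m.val = ∑ i ∈ Finset.range d, f i := by
  obtain ⟨n, rfl⟩ := Nat.exists_eq_succ_of_ne_zero (NeZero.ne d)
  rw [← Fin.sum_univ_eq_sum_range]
  rfl

lemma sum_chi (k : ZMod d) :
    ∑ m : ZMod d, chi d (m * k) = if k = 0 then (d : ℂ) else 0 := by
  split_ifs with hk
  · subst hk
    simp only [mul_zero, chi_zero]
    simp [ZMod.card]
  · have hz : IsPrimitiveRoot (zeta d) d := Complex.isPrimitiveRoot_exp d (NeZero.ne d)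
    have hkval : 0 < k.val := ZMod.val_pos.mpr hk
    have hklt : k.val < d := ZMod.val_lt k
    have hw : zeta d ^ k.val ≠ 1 := hz.pow_ne_one_of_pos_of_lt hkval.ne' hklt
    have : ∀ m : ZMod d, chi d (m * k) = (fun i : ℕ => (zeta d ^ k.val) ^ i) m.val := by
      intro m
      rw [chi_eq_pow, ZMod.val_mul, zeta_pow_mod, pow_mul']
    rw [Finset.sum_congr rfl fun m _ => this m, sum_val]
    rw [geom_sum_eq hw]
    rw [← pow_mul, mul_comm k.val d, pow_mul, zeta_pow_d, one_pow, sub_self, zero_div]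

/-! ### Real-valued amplitude lemmas -/

noncomputable def rv (i : ZMod d) : ℝ :=
  Real.sqrt (Real.sqrt d / (2 * (Real.sqrt d + 1))) *
    ((if i = 0 then 1 else 0) + (Real.sqrt d)⁻¹)

lemma s_pos : 0 < Real.sqrt d := Real.sqrt_pos.mpr (by
  exact_mod_cast Nat.pos_of_ne_zero (NeZero.ne d))

omit [NeZero d] in
lemma s_sq : Real.sqrt d * Real.sqrt d = (d : ℝ) :=
  Real.mul_self_sqrt (Nat.cast_nonneg d)

lemma cc_sq : Real.sqrt (Real.sqrt d / (2 * (Real.sqrt d + 1))) ^ 2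
    = Real.sqrt d / (2 * (Real.sqrt d + 1)) := by
  have h1 : (0:ℝ) < Real.sqrt d := s_pos d
  rw [Real.sq_sqrt]
  positivity

lemma rv_sq (i : ZMod d) :
    rv d i ^ 2 = tcrit d * (if i = 0 then 1 else 0) + (1 - tcrit d) * noiseDist d i := by
  have hs := s_pos d
  have hs2 := s_sq d
  have hc := cc_sq d
  obtain ⟨s, hsdef⟩ : ∃ s, Real.sqrt d = s := ⟨_, rfl⟩
  rw [hsdef] at hs hs2 hc
  rw [rv, mul_pow, tcrit, noiseDist, hsdef, hc]
  have h1 : s ≠ 0 := ne_of_gt hs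
  have h2 : s + 1 ≠ 0 := by positivity
  split_ifs with hi
  · field_simp
    ring
  · have hd1 : d ≠ 1 := by rintro rfl; exact hi (Subsingleton.elim i 0)
    have hd0 : d ≠ 0 := NeZero.ne d
    have hd2 : (2:ℝ) ≤ (d:ℝ) := by exact_mod_cast (by omega : 2 ≤ d)
    rw [← hs2]
    have h3 : s * s - 1 ≠ 0 := by nlinarith
    have h3' : s ^ 2 - 1 ≠ 0 := by nlinarith
    field_simp
    ring

lemma corr (a : ZMod d) : ∑ m : ZMod d, rv d m * rv d (m - a)
    = Real.sqrt d / (2 * (Real.sqrt d + 1)) *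
      ((if a = 0 then 1 else 0) + 2 * (Real.sqrt d)⁻¹ + 1) := by
  have hs := s_pos d
  have hs2 := s_sq d
  have hc := cc_sq d
  set c := Real.sqrt (Real.sqrt d / (2 * (Real.sqrt d + 1))) with hcdef
  set u := (Real.sqrt d)⁻¹ with hudef
  have expand : ∀ m : ZMod d, rv d m * rv d (m - a) =
      (if m = a then (c * c) * (if m = 0 then 1 else 0) else 0)
      + (c * c * u) * (if m = 0 then 1 else 0)
      + (c * c * u) * (if m = a then 1 else 0) + c * c * (u * u) := by
    intro m
    rw [rv, rv]
    simp only [sub_eq_zero, ← hcdef, ← hudef]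
    split_ifs <;> ring
  rw [Finset.sum_congr rfl fun m _ => expand m]
  rw [Finset.sum_add_distrib, Finset.sum_add_distrib, Finset.sum_add_distrib]
  rw [← Finset.mul_sum, ← Finset.mul_sum]
  simp only [Finset.sum_ite_eq', Finset.mem_univ, if_true, Finset.sum_const,
    Finset.card_univ, ZMod.card, nsmul_eq_mul]
  have hd0 : (d:ℝ) ≠ 0 := Nat.cast_ne_zero.mpr (NeZero.ne d)
  have hu2 : (d : ℝ) * (c * c * (u * u)) = c * c := by
    rw [hudef, ← mul_inv, hs2]
    field_simp
  rw [hu2]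
  have hcc : c * c = Real.sqrt d / (2 * (Real.sqrt d + 1)) := by
    rw [← hc]; ring
  rw [hcc]
  split_ifs <;> ring

lemma corr_zero : ∑ m : ZMod d, rv d m * rv d m = 1 := by
  have h := corr d 0
  simp only [sub_zero, if_pos rfl, if_true] at h
  rw [h]
  have hs := s_pos d
  have h1 : Real.sqrt d ≠ 0 := ne_of_gt hs
  have h2 : Real.sqrt d + 1 ≠ 0 := by positivity
  field_simp
  ring

lemma corr_ne {a : ZMod d} (ha : a ≠ 0) :
    ∑ m : ZMod d, rv d m * rv d (m - a)
      = tcrit d - (1 - tcrit d) * (1 / ((d:ℝ) - 1)) := by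
  rw [corr d a, if_neg ha, tcrit]
  have hs := s_pos d
  have hs2 := s_sq d
  obtain ⟨s, hsdef⟩ : ∃ s, Real.sqrt d = s := ⟨_, rfl⟩
  rw [hsdef] at hs hs2 ⊢
  have hd1 : d ≠ 1 := by rintro rfl; exact ha (Subsingleton.elim a 0)
  have hd0 : d ≠ 0 := NeZero.ne d
  have hd2 : (2:ℝ) ≤ (d:ℝ) := by exact_mod_cast (by omega : 2 ≤ d)
  rw [← hs2]
  have h1 : s ≠ 0 := ne_of_gt hs
  have h2 : s + 1 ≠ 0 := by positivity
  have h3 : s * s - 1 ≠ 0 := by nlinarith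
  have h3' : s ^ 2 - 1 ≠ 0 := by nlinarith
  field_simp
  ring

lemma noiseDist_neg (m : ZMod d) : noiseDist d (-m) = noiseDist d m := by
  simp only [noiseDist, neg_eq_zero]

lemma noiseDist_eq (m : ZMod d) :
    noiseDist d m = (1 - (if m = 0 then 1 else 0)) / ((d:ℝ) - 1) := by
  rw [noiseDist]; split_ifs <;> simp

/-! ### Vector and matrix lemmas -/

lemma eta_eq (i : ZMod d) : etaVec d i = ((rv d i : ℝ) : ℂ) := by
  rw [etaVec, rv]
  split_ifs <;> push_cast <;> ring

lemma star_eta (i : ZMod d) : star (etaVec d) i = ((rv d i : ℝ) : ℂ) := by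
  rw [Pi.star_apply, eta_eq, Complex.star_def, Complex.conj_ofReal]

lemma trace_vmv (M : Matrix (ZMod d) (ZMod d) ℂ) :
    (Matrix.vecMulVec (etaVec d) (star (etaVec d)) * M).trace
      = ∑ x : ZMod d, ∑ y : ZMod d, ((rv d x : ℝ) : ℂ) * ((rv d y : ℝ) : ℂ) * M y x := by
  rw [Matrix.trace]
  congr 1
  ext x
  rw [Matrix.diag_apply, Matrix.mul_apply]
  congr 1
  ext y
  rw [Matrix.vecMulVec_apply, eta_eq, star_eta]

lemma psd_smul_vmv (c : ℝ) (hc : 0 ≤ c) (v : ZMod d → ℂ) :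
    (((c:ℂ)) • Matrix.vecMulVec v (star v)).PosSemidef := by
  refine Matrix.PosSemidef.of_dotProduct_mulVec_nonneg ?_ ?_
  · ext x y
    simp only [Matrix.conjTranspose_apply, Matrix.smul_apply, Matrix.vecMulVec_apply,
      Pi.star_apply, smul_eq_mul, Complex.star_def, map_mul, Complex.conj_conj,
      Complex.conj_ofReal]
    ring
  · intro x
    have hmv : (Matrix.vecMulVec v (star v)).mulVec x
        = (dotProduct (star v) x) • v := by
      ext i
      simp only [Matrix.mulVec, dotProduct, Matrix.vecMulVec_apply, Pi.smul_apply,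
        smul_eq_mul]
      rw [Finset.sum_mul]
      exact Finset.sum_congr rfl fun j _ => by simp only [Pi.star_apply]; ring
    rw [Matrix.smul_mulVec, hmv]
    rw [dotProduct_smul, dotProduct_smul]
    have hxv : dotProduct (star x) v
        = star (dotProduct (star v) x) := by
      rw [Matrix.star_dotProduct]
    rw [hxv, smul_eq_mul, smul_eq_mul]
    have h1 : (0:ℂ) ≤ (c:ℂ) := by exact_mod_cast hc
    exact mul_nonneg h1 (mul_star_self_nonneg _)

lemma tcrit_one : tcrit 1 = 1 := by
  rw [tcrit]
  norm_num

lemma pb_zero :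
    (Real.sqrt d / (2 * (Real.sqrt d + 1)) * (2 * (Real.sqrt d)⁻¹ + 1) * d
      + Real.sqrt d / (2 * (Real.sqrt d + 1))) / d = tcrit d := by
  have hs := s_pos d
  have hs2 := s_sq d
  obtain ⟨s, hsdef⟩ : ∃ s, Real.sqrt d = s := ⟨_, rfl⟩
  rw [hsdef] at hs hs2
  rw [tcrit, hsdef, ← hs2]
  have h1 : s ≠ 0 := ne_of_gt hs
  have h2 : s + 1 ≠ 0 := by positivity
  field_simp
  ring

lemma pb_ne (hd : d ≠ 1) :
    Real.sqrt d / (2 * (Real.sqrt d + 1)) / d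
      = (1 - tcrit d) * (1 / ((d:ℝ) - 1)) := by
  have hs := s_pos d
  have hs2 := s_sq d
  obtain ⟨s, hsdef⟩ : ∃ s, Real.sqrt d = s := ⟨_, rfl⟩
  rw [hsdef] at hs hs2
  rw [tcrit, hsdef, ← hs2]
  have hd0 : d ≠ 0 := NeZero.ne d
  have hd2 : (2:ℝ) ≤ (d:ℝ) := by exact_mod_cast (by omega : 2 ≤ d)
  have h1 : s ≠ 0 := ne_of_gt hs
  have h2 : s + 1 ≠ 0 := by positivity
  have h3 : s * s - 1 ≠ 0 := by nlinarith
  have h3' : s ^ 2 - 1 ≠ 0 := by nlinarith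
  field_simp
  ring

lemma sum_noise (k : ZMod d) :
    (1 - tcrit d) * ∑ p : ZMod d, noiseDist d (k - p) = 1 - tcrit d := by
  by_cases hd : d = 1
  · subst hd
    rw [tcrit_one]
    ring
  · have heq : ∑ p : ZMod d, noiseDist d (k - p) = ∑ m : ZMod d, noiseDist d m := by
      exact Fintype.sum_equiv (Equiv.subLeft k) _ _ fun p => rfl
    rw [heq]
    have hsum : ∑ m : ZMod d, noiseDist d m = 1 := by
      rw [Finset.sum_congr rfl fun m (_ : m ∈ Finset.univ) => noiseDist_eq d m]
      rw [← Finset.sum_div]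
      rw [Finset.sum_sub_distrib]
      simp only [Finset.sum_const, Finset.card_univ, ZMod.card, nsmul_eq_mul, mul_one,
        Finset.sum_ite_eq', Finset.mem_univ, if_true]
      have hd0 : d ≠ 0 := NeZero.ne d
      have hd2 : (2:ℝ) ≤ (d:ℝ) := by exact_mod_cast (by omega : 2 ≤ d)
      have : (d:ℝ) - 1 ≠ 0 := by linarith
      field_simp
    rw [hsum, mul_one]

/-! ### The joint POVM -/

noncomputable def vvec (j k : ZMod d) : ZMod d → ℂ :=
  fun x => chi d (k * x) * ((rv d (x - j) : ℝ) : ℂ)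

noncomputable def GJ (p : ZMod d × ZMod d) : Matrix (ZMod d) (ZMod d) ℂ :=
  ((((d:ℝ))⁻¹ : ℝ) : ℂ) • Matrix.vecMulVec (vvec d p.1 p.2) (star (vvec d p.1 p.2))

lemma GJ_apply (j k x y : ZMod d) :
    GJ d (j, k) x y
      = ((d:ℝ) : ℂ)⁻¹ * (chi d (k * (x - y)) * ((rv d (x - j) * rv d (y - j) : ℝ) : ℂ)) := by
  have hchi : chi d (k * x) * (starRingEnd ℂ) (chi d (k * y)) = chi d (k * (x - y)) := by
    rw [chi_mul_conj, mul_sub]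
  have hstar : (star (vvec d j k)) y
      = ((rv d (y - j) : ℝ) : ℂ) * (starRingEnd ℂ) (chi d (k * y)) := by
    rw [Pi.star_apply, vvec]
    simp only [star_mul', Complex.star_def, Complex.conj_ofReal]
    ring
  simp only [GJ, Matrix.smul_apply, Matrix.vecMulVec_apply, smul_eq_mul, Complex.ofReal_inv]
  rw [hstar]
  simp only [vvec]
  rw [← hchi]
  push_cast
  ring

lemma GJ_psd (p : ZMod d × ZMod d) : (GJ d p).PosSemidef := by
  exact psd_smul_vmv d ((d:ℝ))⁻¹ (by positivity) _

end Aux15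

theorem stmt15 (d : ℕ) [NeZero d] :
    (∀ j : ZMod d,
      ((Matrix.vecMulVec (etaVec d) (star (etaVec d))) * Qobs d (-j)).trace =
        ((tcrit d * (if j = 0 then 1 else 0) + (1 - tcrit d) * noiseDist d j : ℝ) : ℂ)) ∧
    (∀ k : ZMod d,
      ((Matrix.vecMulVec (etaVec d) (star (etaVec d))) * Pobs d (-k)).trace =
        ((tcrit d * (if k = 0 then 1 else 0) + (1 - tcrit d) * noiseDist d k : ℝ) : ℂ)) ∧
    JointlyMeasurable
      (fun j => tcrit d • Qobs d j + (1 - tcrit d) • ∑ q, noiseDist d (j - q) • Qobs d q)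
      (fun k => tcrit d • Pobs d k + (1 - tcrit d) • ∑ p, noiseDist d (k - p) • Pobs d p) := by
  classical
  refine ⟨?_, ?_, ?_⟩
  · -- Q-trace condition
    intro j
    rw [Aux15.trace_vmv]
    have hterm : ∀ x y : ZMod d, ((Aux15.rv d x : ℝ) : ℂ) * ((Aux15.rv d y : ℝ) : ℂ)
        * Qobs d (-j) y x
        = if y = -j then (if x = -j then ((Aux15.rv d x * Aux15.rv d y : ℝ) : ℂ) else 0)
          else 0 := by
      intro x y
      rw [Qobs, Matrix.single, Matrix.of_apply]
      by_cases h1 : y = -j <;> by_cases h2 : x = -j <;>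
        simp [h1, h2, eq_comm] <;> push_cast <;> ring
    simp only [hterm]
    simp only [Finset.sum_ite_eq', Finset.mem_univ, if_true]
    have hrv := Aux15.rv_sq d (-j)
    rw [pow_two] at hrv
    simp only [neg_eq_zero, Aux15.noiseDist_neg] at hrv
    rw [hrv]
  · -- P-trace condition
    intro k
    rw [Aux15.trace_vmv]
    have hterm : ∀ x y : ZMod d, ((Aux15.rv d x : ℝ) : ℂ) * ((Aux15.rv d y : ℝ) : ℂ)
        * Pobs d (-k) y x
        = ((Aux15.rv d x * Aux15.rv d y : ℝ) : ℂ) * (chi d ((x - y) * k) / d) := by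
      intro x y
      rw [Pobs, Matrix.of_apply]
      rw [show (y - x) * (-k) = (x - y) * k by ring]
      push_cast
      ring
    simp only [hterm]
    have hre : ∀ x : ZMod d, ∑ y : ZMod d,
        ((Aux15.rv d x * Aux15.rv d y : ℝ) : ℂ) * (chi d ((x - y) * k) / d)
        = ∑ s : ZMod d,
          ((Aux15.rv d x * Aux15.rv d (x - s) : ℝ) : ℂ) * (chi d (s * k) / d) := by
      intro x
      refine (Fintype.sum_equiv (Equiv.subLeft x) _ _ fun s => ?_).symm
      simp only [Equiv.subLeft_apply]
      rw [show x - (x - s) = s by ring]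
    simp only [hre]
    rw [Finset.sum_comm]
    have hfac : ∀ s : ZMod d, ∑ x : ZMod d,
        ((Aux15.rv d x * Aux15.rv d (x - s) : ℝ) : ℂ) * (chi d (s * k) / d)
        = ((∑ x : ZMod d, Aux15.rv d x * Aux15.rv d (x - s) : ℝ) : ℂ)
          * (chi d (s * k) / d) := by
      intro s
      push_cast
      rw [Finset.sum_mul]
    simp only [hfac]
    have hcorr : ∀ s : ZMod d,
        ((∑ x : ZMod d, Aux15.rv d x * Aux15.rv d (x - s) : ℝ) : ℂ)
        = ((Real.sqrt d / (2 * (Real.sqrt d + 1)) * (2 * (Real.sqrt d)⁻¹ + 1) : ℝ) : ℂ)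
          + (if s = 0 then ((Real.sqrt d / (2 * (Real.sqrt d + 1)) : ℝ) : ℂ) else 0) := by
      intro s
      rw [Aux15.corr d s]
      split_ifs <;> push_cast <;> ring
    simp only [hcorr, add_mul, Finset.sum_add_distrib]
    rw [← Finset.mul_sum]
    have hs1 : ∑ s : ZMod d, chi d (s * k) / (d:ℂ)
        = (if k = 0 then (d:ℂ) else 0) / d := by
      rw [← Finset.sum_div, Aux15.sum_chi]
    have hs2 : ∑ s : ZMod d,
        (if s = 0 then ((Real.sqrt d / (2 * (Real.sqrt d + 1)) : ℝ) : ℂ) else 0)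
          * (chi d (s * k) / d)
        = ((Real.sqrt d / (2 * (Real.sqrt d + 1)) : ℝ) : ℂ) / d := by
      rw [Finset.sum_eq_single 0]
      · rw [if_pos rfl, zero_mul, Aux15.chi_zero]
        ring
      · intro b _ hb
        rw [if_neg hb, zero_mul]
      · intro h
        exact absurd (Finset.mem_univ 0) h
    rw [hs1, hs2]
    have hd0 : ((d:ℝ):ℂ) ≠ 0 := by
      exact_mod_cast Nat.cast_ne_zero.mpr (NeZero.ne d)
    by_cases hk : k = 0
    · subst hk
      have hrhs : ((tcrit d * (if (0:ZMod d) = 0 then 1 else 0)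
          + (1 - tcrit d) * noiseDist d 0 : ℝ) : ℂ) = ((tcrit d : ℝ) : ℂ) := by
        simp [noiseDist]
      rw [hrhs, if_pos rfl]
      have hgoal : ((Real.sqrt d / (2 * (Real.sqrt d + 1)) * (2 * (Real.sqrt d)⁻¹ + 1) * d
          + Real.sqrt d / (2 * (Real.sqrt d + 1)) : ℝ) : ℂ) / d
          = ((tcrit d : ℝ) : ℂ) := by
        rw [← Aux15.pb_zero d]
        push_cast
        ring
      rw [← hgoal]
      push_cast
      ring
    · have hd1 : d ≠ 1 := by rintro rfl; exact hk (Subsingleton.elim k 0)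
      have hrhs : ((tcrit d * (if k = 0 then 1 else 0)
          + (1 - tcrit d) * noiseDist d k : ℝ) : ℂ)
          = (((1 - tcrit d) * (1 / ((d:ℝ) - 1)) : ℝ) : ℂ) := by
        rw [noiseDist, if_neg hk, if_neg hk]
        push_cast
        ring
      rw [hrhs, if_neg hk]
      have hgoal : ((Real.sqrt d / (2 * (Real.sqrt d + 1)) : ℝ) : ℂ) / d
          = (((1 - tcrit d) * (1 / ((d:ℝ) - 1)) : ℝ) : ℂ) := by
        rw [← Aux15.pb_ne d hd1]
        push_cast
        ring
      rw [← hgoal]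
      push_cast
      ring
  · -- joint measurability
    have hd0 : ((d:ℝ):ℂ) ≠ 0 := by
      exact_mod_cast Nat.cast_ne_zero.mpr (NeZero.ne d)
    -- entry formula for the first marginal target
    have hA_entry : ∀ (j x y : ZMod d),
        (tcrit d • Qobs d j + (1 - tcrit d) • ∑ q, noiseDist d (j - q) • Qobs d q) x y
        = if x = y then
            ((tcrit d * (if x = j then 1 else 0)
              + (1 - tcrit d) * noiseDist d (x - j) : ℝ) : ℂ)
          else 0 := by
      intro j x y
      rw [Matrix.add_apply, Matrix.smul_apply, Matrix.smul_apply, Matrix.sum_apply]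
      simp only [Matrix.smul_apply, Qobs, Matrix.single, Matrix.of_apply]
      by_cases hxy : x = y
      · subst hxy
        rw [if_pos rfl]
        simp only [and_self]
        rw [Finset.sum_eq_single x (fun q _ hq => by rw [if_neg (by simpa [eq_comm] using hq),
          smul_zero]) (fun h => absurd (Finset.mem_univ x) h)]
        rw [if_pos rfl]
        have hnu : noiseDist d (j - x) = noiseDist d (x - j) := by
          rw [show j - x = -(x - j) by ring, Aux15.noiseDist_neg]
        rw [hnu]
        by_cases hjx : j = x
        · rw [if_pos hjx, if_pos hjx.symm]
          push_cast
          simp [Complex.real_smul]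
        · rw [if_neg hjx, if_neg (fun h => hjx h.symm)]
          push_cast
          simp [Complex.real_smul]
      · rw [if_neg hxy, if_neg (fun h => hxy (h.1.symm.trans h.2))]
        rw [Finset.sum_eq_zero (fun q _ => by
          rw [if_neg (fun h => hxy (h.1.symm.trans h.2)), smul_zero])]
        simp
    -- the first marginal
    have margA : ∀ j : ZMod d, (∑ k : ZMod d, Aux15.GJ d (j, k))
        = tcrit d • Qobs d j + (1 - tcrit d) • ∑ q, noiseDist d (j - q) • Qobs d q := by
      intro j
      ext x y
      rw [Matrix.sum_apply, hA_entry]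
      have hL : ∑ k : ZMod d, Aux15.GJ d (j, k) x y
          = (((d:ℝ):ℂ)⁻¹ * ((Aux15.rv d (x - j) * Aux15.rv d (y - j) : ℝ) : ℂ))
            * (if x - y = 0 then (d:ℂ) else 0) := by
        rw [← Aux15.sum_chi d (x - y), Finset.mul_sum]
        refine Finset.sum_congr rfl fun k _ => ?_
        rw [Aux15.GJ_apply]
        ring
      rw [hL]
      by_cases hxy : x = y
      · subst hxy
        rw [if_pos (sub_self x), if_pos rfl]
        have h := Aux15.rv_sq d (x - j)
        rw [pow_two] at h
        simp only [sub_eq_zero] at h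
        rw [← h]
        push_cast
        field_simp [Nat.cast_ne_zero.mpr (NeZero.ne d)]
      · rw [if_neg (sub_ne_zero.mpr hxy), if_neg hxy, mul_zero]
    -- entry formula for the second marginal target
    have hB_entry : ∀ (k x y : ZMod d),
        (tcrit d • Pobs d k + (1 - tcrit d) • ∑ p, noiseDist d (k - p) • Pobs d p) x y
        = ((tcrit d : ℝ) : ℂ) * (chi d ((x - y) * k) / d)
          + ((1 - tcrit d : ℝ) : ℂ) * ∑ p : ZMod d,
              ((noiseDist d (k - p) : ℝ) : ℂ) * (chi d ((x - y) * p) / d) := by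
      intro k x y
      rw [Matrix.add_apply, Matrix.smul_apply, Matrix.smul_apply, Matrix.sum_apply]
      simp only [Matrix.smul_apply, Pobs, Matrix.of_apply, Complex.real_smul,
        Finset.mul_sum]
    -- the second marginal
    have margB : ∀ k : ZMod d, (∑ j : ZMod d, Aux15.GJ d (j, k))
        = tcrit d • Pobs d k + (1 - tcrit d) • ∑ p, noiseDist d (k - p) • Pobs d p := by
      intro k
      ext x y
      rw [Matrix.sum_apply, hB_entry]
      have hL : ∑ j : ZMod d, Aux15.GJ d (j, k) x y
          = ((d:ℝ):ℂ)⁻¹ * chi d (k * (x - y))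
            * ((∑ m : ZMod d, Aux15.rv d m * Aux15.rv d (m - (x - y)) : ℝ) : ℂ) := by
        rw [Finset.sum_congr rfl fun j _ => Aux15.GJ_apply d j k x y]
        have hre : ∑ j : ZMod d, ((Aux15.rv d (x - j) * Aux15.rv d (y - j) : ℝ) : ℂ)
            = ((∑ m : ZMod d, Aux15.rv d m * Aux15.rv d (m - (x - y)) : ℝ) : ℂ) := by
          push_cast
          refine Fintype.sum_equiv (Equiv.subLeft x) _ _ fun j => ?_
          simp only [Equiv.subLeft_apply]
          rw [show y - j = x - j - (x - y) by ring]
        rw [← Finset.mul_sum, ← Finset.mul_sum, hre]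
        ring
      rw [hL]
      -- noise character sum
      have hnu : ∑ p : ZMod d, ((noiseDist d (k - p) : ℝ) : ℂ) * (chi d ((x - y) * p) / d)
          = ((((d:ℝ) - 1)⁻¹ : ℝ) : ℂ)
            * ((if x - y = 0 then (d:ℂ) else 0) - chi d ((x - y) * k)) / d := by
        have hterm : ∀ p : ZMod d, ((noiseDist d (k - p) : ℝ) : ℂ)
            = ((((d:ℝ) - 1)⁻¹ : ℝ) : ℂ) * (1 - if p = k then 1 else 0) := by
          intro p
          rw [Aux15.noiseDist_eq]
          by_cases h : k - p = 0
          · rw [if_pos h, if_pos (sub_eq_zero.mp h).symm]; push_cast; ring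
          · rw [if_neg h, if_neg (fun hh : p = k => h (by rw [hh, sub_self]))]
            push_cast; ring
        rw [Finset.sum_congr rfl fun p _ => by rw [hterm p]]
        have hsplit : ∀ p : ZMod d,
            ((((d:ℝ) - 1)⁻¹ : ℝ) : ℂ) * (1 - if p = k then 1 else 0)
              * (chi d ((x - y) * p) / d)
            = ((((d:ℝ) - 1)⁻¹ : ℝ) : ℂ) * (chi d ((x - y) * p) / d)
              - (if p = k then ((((d:ℝ) - 1)⁻¹ : ℝ) : ℂ) * (chi d ((x - y) * p) / d)
                else 0) := by
          intro p
          split_ifs <;> ring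
        rw [Finset.sum_congr rfl fun p _ => hsplit p, Finset.sum_sub_distrib]
        rw [Finset.sum_ite_eq' Finset.univ k
          (fun p => ((((d:ℝ) - 1)⁻¹ : ℝ) : ℂ) * (chi d ((x - y) * p) / d))]
        have hchisum : ∑ p : ZMod d, ((((d:ℝ) - 1)⁻¹ : ℝ) : ℂ) * (chi d ((x - y) * p) / d)
            = ((((d:ℝ) - 1)⁻¹ : ℝ) : ℂ) * ((if x - y = 0 then (d:ℂ) else 0) / d) := by
          rw [← Finset.mul_sum, ← Finset.sum_div]
          rw [show ∑ p : ZMod d, chi d ((x - y) * p) = ∑ p : ZMod d, chi d (p * (x - y)) from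
            Finset.sum_congr rfl fun p _ => by rw [mul_comm]]
          rw [Aux15.sum_chi]
        rw [hchisum]
        simp only [Finset.mem_univ, if_true]
        ring
      rw [hnu]
      by_cases hS : x - y = 0
      · rw [if_pos hS, hS]
        rw [zero_mul, mul_zero, Aux15.chi_zero]
        simp only [sub_zero]
        rw [Aux15.corr_zero d]
        by_cases hd1 : d = 1
        · subst hd1
          norm_num [Aux15.tcrit_one]
        · have hD : ((d:ℝ) - 1) ≠ 0 := by
            have hd0' : d ≠ 0 := NeZero.ne d
            have : (2:ℝ) ≤ (d:ℝ) := by exact_mod_cast (by omega : 2 ≤ d)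
            linarith
          have hDc : ((d:ℂ) - 1) ≠ 0 := by exact_mod_cast hD
          have hι : ((d:ℂ) - 1)⁻¹ * ((d:ℂ) - 1) = 1 := inv_mul_cancel₀ hDc
          push_cast
          linear_combination (-(1 - (tcrit d : ℂ)) / (d : ℂ)) * hι
      · rw [if_neg hS]
        rw [Aux15.corr_ne d hS]
        rw [show k * (x - y) = (x - y) * k by ring]
        push_cast
        ring
    -- total sum equals one
    have hsum : ∑ p : ZMod d × ZMod d, Aux15.GJ d p = 1 := by
      rw [Fintype.sum_prod_type]
      rw [Finset.sum_congr rfl fun j _ => margA j]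
      ext x y
      rw [Matrix.sum_apply, Matrix.one_apply]
      by_cases hxy : x = y
      · subst hxy
        rw [if_pos rfl]
        rw [Finset.sum_congr rfl fun j _ => by rw [hA_entry j x x, if_pos rfl]]
        have hcast : ∑ j : ZMod d, ((tcrit d * (if x = j then 1 else 0)
            + (1 - tcrit d) * noiseDist d (x - j) : ℝ) : ℂ)
            = ((∑ j : ZMod d, (tcrit d * (if x = j then 1 else 0)
              + (1 - tcrit d) * noiseDist d (x - j)) : ℝ) : ℂ) := by
          push_cast
          rfl
        rw [hcast]
        have hreal : ∑ j : ZMod d, (tcrit d * (if x = j then 1 else 0)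
            + (1 - tcrit d) * noiseDist d (x - j)) = 1 := by
          rw [Finset.sum_add_distrib, ← Finset.mul_sum, ← Finset.mul_sum]
          rw [Aux15.sum_noise d x]
          simp only [Finset.sum_ite_eq, Finset.mem_univ, if_true, mul_one]
          ring
        rw [hreal]
        norm_num
      · rw [if_neg hxy]
        rw [Finset.sum_congr rfl fun j _ => hA_entry j x y]
        simp [hxy]
    exact ⟨Aux15.GJ d, ⟨fun p => Aux15.GJ_psd d p, hsum⟩, margA, margB⟩
end

section
/- Let ℋ be a d-dimensional Hilbert space, id the identity channel on states of ℋ, and 𝒯 the completely depolarizing channel 𝒯(ρ) = 𝟙/d. Then for λ ∈ [0,1], the channel λ•𝒯 + (1-λ)•id is compatible with itself (i.e., there exists a channel S(ℋ) → S(ℋ⊗ℋ) with both partial-trace marginals equal to it) if and only if d/(2(d+1)) ≤ λ ≤ d²/(d²-1) ∩ [0,1], i.e., λ ≥ d/(2(d+1)). -/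
open scoped ComplexOrder

/-- Partial trace over the second tensor factor. -/
noncomputable def ptrace2 {a b : Type*} [Fintype b]
    (ρ : Matrix (a × b) (a × b) ℂ) : Matrix a a ℂ :=
  Matrix.of fun i j => ∑ k, ρ (i, k) (j, k)

/-- Partial trace over the first tensor factor. -/
noncomputable def ptrace1 {a b : Type*} [Fintype a]
    (ρ : Matrix (a × b) (a × b) ℂ) : Matrix b b ℂ :=
  Matrix.of fun i j => ∑ k, ρ (k, i) (k, j)

/-- A channel is self-compatible if it arises as both marginals of a single
channel into the doubled system. -/
def SelfCompatible {h : Type*} [Fintype h] [DecidableEq h]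
    (E : Matrix h h ℂ →ₗ[ℂ] Matrix h h ℂ) : Prop :=
  ∃ F : Matrix h h ℂ →ₗ[ℂ] Matrix (h × h) (h × h) ℂ, IsChannel F ∧
    (∀ ρ, ptrace2 (F ρ) = E ρ) ∧ (∀ ρ, ptrace1 (F ρ) = E ρ)

/-- The completely depolarizing channel `ρ ↦ tr(ρ)·𝟙/d`. -/
noncomputable def depol (d : ℕ) : Matrix (Fin d) (Fin d) ℂ →ₗ[ℂ] Matrix (Fin d) (Fin d) ℂ where
  toFun ρ := (ρ.trace / d) • 1
  map_add' ρ τ := by simp [Matrix.trace_add, add_div, add_smul]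
  map_smul' c ρ := by simp [Matrix.trace_smul, smul_smul, mul_div_assoc]

/-!
Sufficiency: the symmetric cloner `ρ ↦ (1 + SWAP) (ρ ⊗ 𝟙) (1 + SWAP)` is completely positive and
has both marginals equal to `(d + 2) ρ + tr ρ • 𝟙`; mixing it with `ρ ↦ tr ρ • 𝟙` produces a joint
channel for `ℰ_λ = λ𝒯 + (1 - λ) id` whenever `d / (2 (d + 1)) ≤ λ ≤ 1`.

Necessity: let `C ≥ 0` be the Choi matrix of a joint channel, so `tr C = d`. With
`Ω = ∑ₚ |pp⟩` and `P₁ⱼ = |Ω⟩⟨Ω|₁ⱼ ⊗ 𝟙`, the two marginal conditions say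
`⟨C, P₁₂⟩ = ⟨C, P₁₃⟩ = ⟨Ω|choi ℰ_λ|Ω⟩ = λ + (1 - λ) d²`. Since `P₁₂ + P₁₃ ≤ (d + 1) 𝟙`, this gives
`2 (λ + (1 - λ) d²) ≤ (d + 1) d`, i.e. `λ ≥ d / (2 (d + 1))`.
-/

open Matrix

section Channels

variable {n m : Type*} [Fintype n]

def conjMap (A : Matrix m n ℂ) : Matrix n n ℂ →ₗ[ℂ] Matrix m m ℂ where
  toFun ρ := A * ρ * Aᴴ
  map_add' ρ τ := by rw [Matrix.mul_add, Matrix.add_mul]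
  map_smul' c ρ := by rw [Matrix.mul_smul, Matrix.smul_mul]; rfl

lemma conjMap_apply (A : Matrix m n ℂ) (ρ : Matrix n n ℂ) : conjMap A ρ = A * ρ * Aᴴ := rfl

def traceMap [DecidableEq m] : Matrix n n ℂ →ₗ[ℂ] Matrix m m ℂ where
  toFun ρ := ρ.trace • 1
  map_add' ρ τ := by rw [trace_add, add_smul]
  map_smul' c ρ := by rw [trace_smul, smul_assoc]; rfl

lemma traceMap_apply [DecidableEq m] (ρ : Matrix n n ℂ) :
    (traceMap ρ : Matrix m m ℂ) = ρ.trace • 1 := rfl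

variable [Fintype m]

lemma IsTP.affineCombination {Φ Ψ : Matrix n n ℂ →ₗ[ℂ] Matrix m m ℂ} (hΦ : IsTP Φ)
    (hΨ : IsTP Ψ) (t : ℝ) :
    IsTP (t • Φ + (1 - t) • Ψ) := fun ρ => by
  simp only [LinearMap.add_apply, LinearMap.smul_apply, trace_add, trace_smul, hΦ ρ, hΨ ρ]
  rw [← add_smul, add_sub_cancel, one_smul]

variable [DecidableEq n]

lemma IsCP.add {Φ Ψ : Matrix n n ℂ →ₗ[ℂ] Matrix m m ℂ} (hΦ : IsCP Φ) (hΨ : IsCP Ψ) :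
    IsCP (Φ + Ψ) :=
  PosSemidef.add hΦ hΨ

lemma IsCP.smul {Φ : Matrix n n ℂ →ₗ[ℂ] Matrix m m ℂ} (hΦ : IsCP Φ) {c : ℝ} (hc : 0 ≤ c) :
    IsCP (c • Φ) :=
  PosSemidef.smul hΦ hc

lemma isCP_sum {ι : Type*} (s : Finset ι) {Φ : ι → Matrix n n ℂ →ₗ[ℂ] Matrix m m ℂ}
    (hΦ : ∀ i ∈ s, IsCP (Φ i)) : IsCP (∑ i ∈ s, Φ i) :=
  Finset.sum_induction _ IsCP (fun _ _ => IsCP.add) PosSemidef.zero hΦ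

lemma isCP_conjMap (A : Matrix m n ℂ) : IsCP (conjMap A) := by
  have : choi (conjMap A) = vecMulVec (fun x => A x.2 x.1) (star fun x => A x.2 x.1) := by
    ext ⟨p, a⟩ ⟨q, b⟩
    simp [choi, conjMap_apply, Matrix.mul_apply, Matrix.single_apply, vecMulVec_apply, ite_and]
  rw [IsCP, this]
  exact posSemidef_vecMulVec_self_star _

lemma isCP_traceMap [DecidableEq m] : IsCP (traceMap : Matrix n n ℂ →ₗ[ℂ] Matrix m m ℂ) := by
  have : choi (traceMap : Matrix n n ℂ →ₗ[ℂ] Matrix m m ℂ) = 1 := by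
    ext ⟨p, a⟩ ⟨q, b⟩
    by_cases hpq : p = q <;> simp [choi, traceMap_apply, Matrix.one_apply, hpq]
  rw [IsCP, this]
  exact PosSemidef.one

lemma IsTP.trace_choi {Φ : Matrix n n ℂ →ₗ[ℂ] Matrix m m ℂ} (hΦ : IsTP Φ) :
    (choi Φ).trace = Fintype.card n := by
  have hdiag : ∀ p, ∑ a, choi Φ (p, a) (p, a) = 1 := fun p => by
    rw [← trace_single_eq_same (n := n) p (1 : ℂ), ← hΦ]; rfl
  simp [Matrix.trace, Fintype.sum_prod_type, hdiag]

end Channels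

section PartialTrace

variable {a b : Type*}

lemma trace_ptrace2 [Fintype a] [Fintype b] (X : Matrix (a × b) (a × b) ℂ) :
    (ptrace2 X).trace = X.trace := by
  simp [ptrace2, Matrix.trace, Fintype.sum_prod_type]

lemma ptrace2_add [Fintype b] (X Y : Matrix (a × b) (a × b) ℂ) :
    ptrace2 (X + Y) = ptrace2 X + ptrace2 Y := by
  ext i j
  simp [ptrace2, Finset.sum_add_distrib]

lemma ptrace2_smul [Fintype b] (c : ℝ) (X : Matrix (a × b) (a × b) ℂ) :
    ptrace2 (c • X) = c • ptrace2 X := by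
  ext i j
  simp [ptrace2, Finset.smul_sum]

lemma ptrace1_eq_ptrace2_of_submatrix_swap [Fintype a] {X : Matrix (a × a) (a × a) ℂ}
    (hX : X.submatrix Prod.swap Prod.swap = X) : ptrace1 X = ptrace2 X := by
  conv_rhs => rw [← hX]
  rfl

lemma IsTP.of_ptrace2 [Fintype a] [Fintype b] {n : Type*} [Fintype n]
    {F : Matrix n n ℂ →ₗ[ℂ] Matrix (a × b) (a × b) ℂ}
    {E : Matrix n n ℂ →ₗ[ℂ] Matrix a a ℂ} (hE : IsTP E) (hF : ∀ ρ, ptrace2 (F ρ) = E ρ) :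
    IsTP F := fun ρ => by rw [← trace_ptrace2, hF, hE]

lemma ptrace2_traceMap {n : Type*} [Fintype n] [Fintype b] [DecidableEq a] [DecidableEq b]
    (ρ : Matrix n n ℂ) :
    ptrace2 (traceMap ρ : Matrix (a × b) (a × b) ℂ) = ((Fintype.card b : ℂ) * ρ.trace) • 1 := by
  ext p q
  by_cases hpq : p = q <;> simp [ptrace2, traceMap_apply, Matrix.one_apply, hpq]

lemma traceMap_submatrix_swap {n : Type*} [Fintype n] [DecidableEq a] (ρ : Matrix n n ℂ) :
    (traceMap ρ : Matrix (a × a) (a × a) ℂ).submatrix Prod.swap Prod.swap = traceMap ρ := by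
  ext x y
  simp [traceMap_apply, Matrix.one_apply, Prod.swap_inj]

end PartialTrace

section Cloner

variable {h : Type*} [Fintype h] [DecidableEq h]

-- `cloneKraus j = (1 + SWAP) (· ⊗ |j⟩)`, so `cloner ρ = (1 + SWAP) (ρ ⊗ 𝟙) (1 + SWAP)`.
def cloneKraus (j : h) : Matrix (h × h) h ℂ :=
  Matrix.of fun x p => (if x = (p, j) then 1 else 0) + (if x = (j, p) then 1 else 0)

def cloner : Matrix h h ℂ →ₗ[ℂ] Matrix (h × h) (h × h) ℂ :=
  ∑ j, conjMap (cloneKraus j)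

lemma cloner_apply (ρ : Matrix h h ℂ) (a b c e : h) :
    cloner ρ (a, b) (c, e) =
      (ρ a c * if b = e then 1 else 0) + (ρ b c * if a = e then 1 else 0)
        + (ρ a e * if b = c then 1 else 0) + (ρ b e * if a = c then 1 else 0) := by
  simp only [cloner, LinearMap.coe_sum, Finset.sum_apply, Matrix.sum_apply, conjMap_apply,
    Matrix.mul_apply, conjTranspose_apply, cloneKraus, Matrix.of_apply, Prod.mk.injEq]
  simp [add_mul, mul_add, Finset.sum_add_distrib, ite_and, apply_ite (starRingEnd ℂ)]
  ring

lemma isCP_cloner : IsCP (cloner : Matrix h h ℂ →ₗ[ℂ] Matrix (h × h) (h × h) ℂ) :=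
  isCP_sum _ fun j _ => isCP_conjMap (cloneKraus j)

lemma ptrace2_cloner (ρ : Matrix h h ℂ) :
    ptrace2 (cloner ρ) = ((Fintype.card h : ℂ) + 2) • ρ + ρ.trace • 1 := by
  ext p q
  simp [ptrace2, cloner_apply, Finset.sum_add_distrib, Matrix.one_apply, Matrix.trace]
  ring

lemma cloner_submatrix_swap (ρ : Matrix h h ℂ) :
    (cloner ρ).submatrix Prod.swap Prod.swap = cloner ρ := by
  ext ⟨a, b⟩ ⟨c, e⟩
  simp only [submatrix_apply, Prod.swap_prod_mk, cloner_apply]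
  ring

end Cloner

lemma isTP_depol {d : ℕ} (hd : d ≠ 0) : IsTP (depol d) := fun ρ => by
  simp [depol, hd]

noncomputable def depolMix (d : ℕ) (l : ℝ) :
    Matrix (Fin d) (Fin d) ℂ →ₗ[ℂ] Matrix (Fin d) (Fin d) ℂ :=
  l • depol d + (1 - l) • LinearMap.id

lemma depolMix_apply (d : ℕ) (l : ℝ) (ρ : Matrix (Fin d) (Fin d) ℂ) :
    depolMix d l ρ = (l * ρ.trace / d) • 1 + (1 - l) • ρ := by
  simp only [depolMix, depol, LinearMap.add_apply, LinearMap.smul_apply, LinearMap.coe_mk,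
    AddHom.coe_mk, LinearMap.id_apply, ← smul_assoc, Complex.real_smul, mul_div_assoc]

lemma isTP_depolMix {d : ℕ} (hd : d ≠ 0) (l : ℝ) : IsTP (depolMix d l) :=
  (isTP_depol hd).affineCombination (fun _ => rfl) l

lemma selfCompatible_depolMix_of_le {d : ℕ} (hd : d ≠ 0) {l : ℝ} (hl : l ≤ 1)
    (hlow : (d : ℝ) / (2 * ((d : ℝ) + 1)) ≤ l) : SelfCompatible (depolMix d l) := by
  have hd' : (0 : ℝ) < d := by positivity
  -- `c₁ (d + 2) = 1 - l` and `c₁ + c₂ d = l / d` fit the marginals; `c₂ ≥ 0` is the bound on `l`.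
  set c₁ : ℝ := (1 - l) / (d + 2)
  set c₂ : ℝ := (2 * (d + 1) * l - d) / (d ^ 2 * (d + 2))
  have hc₁ : 0 ≤ c₁ := div_nonneg (by linarith) (by positivity)
  have hc₂ : 0 ≤ c₂ := by
    rw [div_le_iff₀ (by positivity)] at hlow
    exact div_nonneg (by linarith) (by positivity)
  set F : Matrix (Fin d) (Fin d) ℂ →ₗ[ℂ] Matrix (Fin d × Fin d) (Fin d × Fin d) ℂ :=
    c₁ • cloner + c₂ • traceMap
  have hmarg : ∀ ρ, ptrace2 (F ρ) = depolMix d l ρ := fun ρ => by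
    simp only [F, LinearMap.add_apply, LinearMap.smul_apply, ptrace2_add, ptrace2_smul,
      ptrace2_cloner, ptrace2_traceMap, depolMix_apply]
    have h₁ : (c₁ : ℂ) * (d + 2) = 1 - l := by
      have : c₁ * (d + 2) = 1 - l := by simp only [c₁]; field_simp
      exact_mod_cast this
    have h₂ : (c₁ : ℂ) + c₂ * d = l / d := by
      have : c₁ + c₂ * d = l / d := by simp only [c₁, c₂]; field_simp; ring
      exact_mod_cast this
    ext p q
    simp only [Matrix.add_apply, Matrix.smul_apply, smul_eq_mul, Complex.real_smul,
      Fintype.card_fin, Complex.ofReal_sub, Complex.ofReal_one]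
    linear_combination (ρ p q) * h₁ + (ρ.trace * (1 : Matrix (Fin d) (Fin d) ℂ) p q) * h₂
  refine ⟨F, ⟨(isCP_cloner.smul hc₁).add (isCP_traceMap.smul hc₂),
    IsTP.of_ptrace2 (isTP_depolMix hd l) hmarg⟩, hmarg, fun ρ => ?_⟩
  have hswap : (F ρ).submatrix Prod.swap Prod.swap = F ρ := by
    change c₁ • (cloner ρ).submatrix Prod.swap Prod.swap
      + c₂ • (traceMap ρ).submatrix Prod.swap Prod.swap = _
    rw [cloner_submatrix_swap, traceMap_submatrix_swap]
    rfl
  rw [ptrace1_eq_ptrace2_of_submatrix_swap hswap, hmarg]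

lemma Matrix.PosSemidef.re_sum_sum_sum_le_mul_trace {ι J K : Type*} [Fintype ι] [Fintype J]
    [Fintype K] {C : Matrix ι ι ℂ} (hC : C.PosSemidef) (e : J → K → ι) {c : ℝ}
    (h : ∀ y : ι → ℂ, ∑ j, ‖∑ k, y (e j k)‖ ^ 2 ≤ c * ∑ x, ‖y x‖ ^ 2) :
    (∑ j, ∑ p, ∑ q, C (e j p) (e j q)).re ≤ c * C.trace.re := by
  obtain ⟨r, v, rfl⟩ := posSemidef_iff_eq_sum_vecMulVec.mp hC
  have hquad : ∀ (w : ι → ℂ) (j : J),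
      ∑ p, ∑ q, w (e j p) * star (w (e j q)) = (‖∑ k, w (e j k)‖ : ℂ) ^ 2 := fun w j => by
    rw [← Finset.sum_mul_sum, ← star_sum, Complex.star_def, Complex.mul_conj']
  have hlhs : ∑ j, ∑ p, ∑ q, (∑ i, vecMulVec (v i) (star (v i))) (e j p) (e j q)
      = ((∑ i, ∑ j, ‖∑ k, v i (e j k)‖ ^ 2 : ℝ) : ℂ) := by
    simp only [Matrix.sum_apply, vecMulVec_apply, Pi.star_apply]
    push_cast
    simp only [← hquad]
    conv_rhs => rw [Finset.sum_comm]
    refine Finset.sum_congr rfl fun j _ => ?_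
    conv_rhs => rw [Finset.sum_comm]
    exact Finset.sum_congr rfl fun p _ => Finset.sum_comm
  have htrace : (∑ i, vecMulVec (v i) (star (v i))).trace
      = ((∑ i, ∑ x, ‖v i x‖ ^ 2 : ℝ) : ℂ) := by
    push_cast
    simp only [Matrix.trace_sum, trace_vecMulVec, dotProduct, Pi.star_apply, Complex.star_def,
      Complex.mul_conj']
  rw [hlhs, htrace, Complex.ofReal_re, Complex.ofReal_re, Finset.mul_sum]
  exact Finset.sum_le_sum fun i _ => h (v i)

lemma sq_norm_sum_le_card_add_one_mul {ι E : Type*} [Fintype ι] [DecidableEq ι]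
    [SeminormedAddCommGroup E] (z : ι → E) (k : ι) :
    ‖∑ i, z i‖ ^ 2 ≤ (Fintype.card ι + 1) * (∑ i, ‖z i‖ ^ 2 - ‖z k‖ ^ 2 / 2) := by
  set g : ι → ℝ := fun i => 1 + if i = k then 1 else 0
  have hg : ∀ i ∈ Finset.univ, 0 < g i := fun i _ => by positivity
  have hsum_g : ∑ i, g i = Fintype.card ι + 1 := by
    simp [g, Finset.sum_add_distrib]
  have hsum_div : ∑ i, ‖z i‖ ^ 2 / g i = ∑ i, ‖z i‖ ^ 2 - ‖z k‖ ^ 2 / 2 := by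
    rw [← Finset.sum_erase_add _ _ (Finset.mem_univ k),
      ← Finset.sum_erase_add _ (fun i => ‖z i‖ ^ 2) (Finset.mem_univ k)]
    have : ∀ i ∈ Finset.univ.erase k, ‖z i‖ ^ 2 / g i = ‖z i‖ ^ 2 := fun i hi => by
      simp [g, Finset.ne_of_mem_erase hi]
    rw [Finset.sum_congr rfl this]
    simp only [g, if_true]
    ring
  have hcs := Finset.sq_sum_div_le_sum_sq_div Finset.univ (fun i => ‖z i‖) hg
  rw [hsum_g, hsum_div, div_le_iff₀ (by positivity)] at hcs
  calc ‖∑ i, z i‖ ^ 2 ≤ (∑ i, ‖z i‖) ^ 2 := by gcongr; exact norm_sum_le _ _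
    _ ≤ _ := by linarith

lemma sum_row_add_sum_col_sub_le {ι : Type*} [Fintype ι] [DecidableEq ι] {g : ι → ι → ℝ}
    (hg : ∀ b c, 0 ≤ g b c) (a : ι) :
    ∑ c, g a c + ∑ b, g b a - g a a ≤ ∑ b, ∑ c, g b c := by
  rw [← Finset.add_sum_erase _ (fun b => g b a) (Finset.mem_univ a),
    ← Finset.add_sum_erase _ (fun b => ∑ c, g b c) (Finset.mem_univ a)]
  have : ∑ b ∈ Finset.univ.erase a, g b a ≤ ∑ b ∈ Finset.univ.erase a, ∑ c, g b c :=
    Finset.sum_le_sum fun b _ => Finset.single_le_sum (fun c _ => hg b c) (Finset.mem_univ a)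
  linarith

-- `P₁₂ + P₁₃ ≤ (card h + 1) • 1`; the vectors `Ω₁₂ ⊗ |k⟩` and `Ω₁₃ ⊗ |k'⟩` overlap only when
-- `k = k'`, in the single entry `(k, k, k)`.
lemma sum_sq_norm_sum_diag_le {h : Type*} [Fintype h] [DecidableEq h] (y : h × h × h → ℂ) :
    ∑ k, (‖∑ i, y (i, i, k)‖ ^ 2 + ‖∑ i, y (i, k, i)‖ ^ 2)
      ≤ (Fintype.card h + 1) * ∑ x, ‖y x‖ ^ 2 := by
  set f : h → h → h → ℝ := fun a b c => ‖y (a, b, c)‖ ^ 2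
  calc ∑ k, (‖∑ i, y (i, i, k)‖ ^ 2 + ‖∑ i, y (i, k, i)‖ ^ 2)
      ≤ ∑ k, (Fintype.card h + 1) * (∑ i, f i i k + ∑ i, f i k i - f k k k) :=
        Finset.sum_le_sum fun k _ => by
          have h₁ := sq_norm_sum_le_card_add_one_mul (fun i => y (i, i, k)) k
          have h₂ := sq_norm_sum_le_card_add_one_mul (fun i => y (i, k, i)) k
          simp only [f]
          linarith
    _ = (Fintype.card h + 1) * ∑ a, (∑ c, f a a c + ∑ b, f a b a - f a a a) := by
        rw [← Finset.mul_sum]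
        simp only [Finset.sum_add_distrib, Finset.sum_sub_distrib]
        rw [Finset.sum_comm (f := fun k i => f i i k), Finset.sum_comm (f := fun k i => f i k i)]
    _ ≤ (Fintype.card h + 1) * ∑ a, ∑ b, ∑ c, f a b c := by
        gcongr with a
        exact sum_row_add_sum_col_sub_le (fun b c => by positivity) a
    _ = (Fintype.card h + 1) * ∑ x, ‖y x‖ ^ 2 := by
        simp only [f, Fintype.sum_prod_type]

section EntFidelity

variable {h : Type*} [Fintype h] [DecidableEq h]

-- `⟨Ω|choi Φ|Ω⟩` for the unnormalised `Ω = ∑ₚ |pp⟩`: `(card h)²` times the entanglement fidelity.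
def entFidelity (Φ : Matrix h h ℂ →ₗ[ℂ] Matrix h h ℂ) : ℂ :=
  ∑ p, ∑ q, Φ (single p q 1) p q

lemma entFidelity_add (Φ Ψ : Matrix h h ℂ →ₗ[ℂ] Matrix h h ℂ) :
    entFidelity (Φ + Ψ) = entFidelity Φ + entFidelity Ψ := by
  simp [entFidelity, Finset.sum_add_distrib]

lemma entFidelity_smul (c : ℝ) (Φ : Matrix h h ℂ →ₗ[ℂ] Matrix h h ℂ) :
    entFidelity (c • Φ) = c * entFidelity Φ := by
  simp [entFidelity, Finset.mul_sum, Complex.real_smul]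

lemma entFidelity_id :
    entFidelity (LinearMap.id : Matrix h h ℂ →ₗ[ℂ] Matrix h h ℂ) = Fintype.card h ^ 2 := by
  simp [entFidelity, sq]

lemma SelfCompatible.two_mul_re_entFidelity_le {E : Matrix h h ℂ →ₗ[ℂ] Matrix h h ℂ}
    (hE : SelfCompatible E) :
    2 * (entFidelity E).re ≤ (Fintype.card h + 1) * Fintype.card h := by
  obtain ⟨F, ⟨hCP, hTP⟩, h₂, h₁⟩ := hE
  have hbound := Matrix.PosSemidef.re_sum_sum_sum_le_mul_trace hCP
    (Sum.elim (fun k i => (i, i, k)) (fun k i => (i, k, i))) (c := Fintype.card h + 1)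
    fun y => by simpa only [Fintype.sum_sum_type, Sum.elim_inl, Sum.elim_inr,
      ← Finset.sum_add_distrib] using sum_sq_norm_sum_diag_le y
  have hfid₂ : entFidelity E = ∑ k, ∑ p, ∑ q, choi F (p, p, k) (q, q, k) := by
    simp only [entFidelity, ← h₂, ptrace2, choi, of_apply]
    exact (Finset.sum_congr rfl fun p _ => Finset.sum_comm).trans Finset.sum_comm
  have hfid₁ : entFidelity E = ∑ k, ∑ p, ∑ q, choi F (p, k, p) (q, k, q) := by
    simp only [entFidelity, ← h₁, ptrace1, choi, of_apply]
    exact (Finset.sum_congr rfl fun p _ => Finset.sum_comm).trans Finset.sum_comm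
  simp only [Fintype.sum_sum_type, Sum.elim_inl, Sum.elim_inr] at hbound
  rw [← hfid₁, ← hfid₂, hTP.trace_choi] at hbound
  simpa [two_mul] using hbound

end EntFidelity

lemma entFidelity_depol {d : ℕ} (hd : d ≠ 0) : entFidelity (depol d) = 1 := by
  have htr : ∀ p q : Fin d, (single p q (1 : ℂ)).trace = if p = q then 1 else 0 := fun p q => by
    split_ifs with hpq <;> simp [hpq]
  simp [entFidelity, depol, htr, Matrix.one_apply, hd]

lemma entFidelity_depolMix {d : ℕ} (hd : d ≠ 0) (l : ℝ) :
    entFidelity (depolMix d l) = ((l + (1 - l) * d ^ 2 : ℝ) : ℂ) := by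
  rw [depolMix, entFidelity_add, entFidelity_smul, entFidelity_smul, entFidelity_depol hd,
    entFidelity_id, Fintype.card_fin]
  push_cast
  ring

theorem stmt16 (d : ℕ) (hd : 2 ≤ d) (l : ℝ) (hl : l ∈ Set.Icc (0 : ℝ) 1) :
    SelfCompatible (l • depol d + (1 - l) • (LinearMap.id :
        Matrix (Fin d) (Fin d) ℂ →ₗ[ℂ] Matrix (Fin d) (Fin d) ℂ)) ↔
      (d : ℝ) / (2 * ((d : ℝ) + 1)) ≤ l := by
  have hd₀ : d ≠ 0 := by omega
  have hd₂ : (2 : ℝ) ≤ d := by exact_mod_cast hd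
  refine ⟨fun hE => ?_, selfCompatible_depolMix_of_le hd₀ hl.2⟩
  have hfid := SelfCompatible.two_mul_re_entFidelity_le (E := depolMix d l) hE
  rw [entFidelity_depolMix hd₀, Complex.ofReal_re, Fintype.card_fin] at hfid
  rw [div_le_iff₀ (by positivity)]
  nlinarith
end

section
/- Let e₀ be the first standard basis vector of ℂ^d, ℱ the finite Fourier operator, and f₀ = ℱe₀ = d^{-1/2}Σ_n e_n. Then the maximum of min{⟨e₀, A e₀⟩, ⟨f₀, A f₀⟩} over all positive semidefinite trace-1 operators A on ℂ^d equals (1/2)(1 + 1/√d), attained at A = |v⟩⟨v| with v = √(√d/(2(√d+1)))·(e₀ + f₀). -/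
/-!
For unit vectors `e`, `f` and a density matrix `A`, the sum
`⟨e, A e⟩ + ⟨f, A f⟩ = tr (A (P_e + P_f))` is at most the top eigenvalue `1 + |⟨e, f⟩|` of
`P_e + P_f`, so the minimum is at most `(1 + |⟨e, f⟩|) / 2`. Writing `A = Bᴴ B`, this reduces
to the inequality `|⟨e, x⟩|² + |⟨f, x⟩|² ≤ (1 + |⟨e, f⟩|) ‖x‖²` for every row `x` of `B`.
If `⟨e, f⟩ = s ≥ 0`, the bound is attained by the pure state on the normalisation of `e + f`,
whose overlap with both `e` and `f` is `(1 + s) / √(2 (1 + s))`. For `e₀` and `f₀ = ℱ e₀`,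
`s = 1 / √d`.
-/

open scoped ComplexOrder InnerProductSpace
open Matrix RCLike

variable {𝕜 : Type*} [RCLike 𝕜]

theorem norm_inner_sq_add_norm_inner_sq_le {E : Type*} [NormedAddCommGroup E]
    [InnerProductSpace 𝕜 E] {e f : E} (he : ‖e‖ = 1) (hf : ‖f‖ = 1) (x : E) :
    ‖⟪e, x⟫_𝕜‖ ^ 2 + ‖⟪f, x⟫_𝕜‖ ^ 2 ≤ (1 + ‖⟪e, f⟫_𝕜‖) * ‖x‖ ^ 2 := by
  set a := ⟪e, x⟫_𝕜
  set b := ⟪f, x⟫_𝕜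
  set S := ‖a‖ ^ 2 + ‖b‖ ^ 2
  -- Cauchy–Schwarz against this `y` gives `S² ≤ ‖y‖² ‖x‖²`, and `‖y‖² ≤ (1 + |⟨e, f⟩|) S`.
  set y := a • e + b • f
  have hyx : re ⟪y, x⟫_𝕜 = S := by
    rw [inner_add_left, inner_smul_left, inner_smul_left, RCLike.conj_mul, RCLike.conj_mul,
      map_add, ← ofReal_pow, ← ofReal_pow, ofReal_re, ofReal_re]
  have hy : ‖y‖ ^ 2 ≤ (1 + ‖⟪e, f⟫_𝕜‖) * S := by
    have hcross : re ⟪a • e, b • f⟫_𝕜 ≤ ‖a‖ * ‖b‖ * ‖⟪e, f⟫_𝕜‖ := by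
      refine (re_le_norm _).trans_eq ?_
      rw [inner_smul_left, inner_smul_right, norm_mul, norm_mul, norm_conj, mul_assoc]
    rw [norm_add_sq (𝕜 := 𝕜), norm_smul, norm_smul, he, hf]
    nlinarith [sq_nonneg (‖a‖ - ‖b‖), norm_nonneg ⟪e, f⟫_𝕜]
  have hS : S ≤ ‖y‖ * ‖x‖ := hyx ▸ re_inner_le_norm y x
  rcases (show 0 ≤ S by positivity).eq_or_lt with hS0 | hSpos
  · rw [← hS0]; positivity
  refine le_of_mul_le_mul_left ?_ hSpos
  calc S * S ≤ (‖y‖ * ‖x‖) ^ 2 := by nlinarith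
    _ = ‖y‖ ^ 2 * ‖x‖ ^ 2 := mul_pow _ _ _
    _ ≤ (1 + ‖⟪e, f⟫_𝕜‖) * S * ‖x‖ ^ 2 := by gcongr
    _ = S * ((1 + ‖⟪e, f⟫_𝕜‖) * ‖x‖ ^ 2) := by ring

variable {n : Type*} [Fintype n]

theorem re_star_dotProduct_self (v : n → 𝕜) : re (star v ⬝ᵥ v) = ∑ i, ‖v i‖ ^ 2 := by
  simp [dotProduct, RCLike.conj_mul]

open scoped MatrixOrder in
theorem Matrix.PosSemidef.re_dotProduct_mulVec_add_le {A : Matrix n n 𝕜} (hA : A.PosSemidef)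
    {e f : n → 𝕜} (he : star e ⬝ᵥ e = 1) (hf : star f ⬝ᵥ f = 1) :
    re (star e ⬝ᵥ A *ᵥ e) + re (star f ⬝ᵥ A *ᵥ f) ≤ (1 + ‖star e ⬝ᵥ f‖) * re A.trace := by
  classical
  obtain ⟨B, rfl⟩ := CStarAlgebra.nonneg_iff_eq_star_mul_self.mp hA.nonneg
  have quad (v : n → 𝕜) : re (star v ⬝ᵥ (star B * B) *ᵥ v) =
      ∑ i, ‖⟪WithLp.toLp 2 (star v), WithLp.toLp 2 (B i)⟫_𝕜‖ ^ 2 := by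
    rw [← mulVec_mulVec, dotProduct_mulVec, star_eq_conjTranspose, vecMul_conjTranspose,
      star_star, re_star_dotProduct_self]
    congr! 3 with i
    rw [EuclideanSpace.inner_toLp_toLp, star_star]
    rfl
  have trace_eq : re (star B * B).trace = ∑ i, ‖WithLp.toLp 2 (B i)‖ ^ 2 := by
    rw [trace_mul_comm, trace, map_sum]
    congr 1 with i
    rw [@norm_sq_eq_re_inner 𝕜]
    rfl
  have norm_eq (v : n → 𝕜) (hv : star v ⬝ᵥ v = 1) : ‖WithLp.toLp 2 (star v)‖ = 1 := by
    rw [← pow_eq_one_iff_of_nonneg (norm_nonneg _) two_ne_zero, @norm_sq_eq_re_inner 𝕜,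
      EuclideanSpace.inner_toLp_toLp, star_star, hv, one_re]
  rw [quad, quad, trace_eq, Finset.mul_sum, ← Finset.sum_add_distrib]
  gcongr with i
  refine (norm_inner_sq_add_norm_inner_sq_le (norm_eq e he) (norm_eq f hf) _).trans_eq ?_
  rw [EuclideanSpace.inner_toLp_toLp, star_star, star_dotProduct, norm_star]

theorem Matrix.PosSemidef.min_re_dotProduct_mulVec_le {A : Matrix n n 𝕜} (hA : A.PosSemidef)
    (htr : A.trace = 1) {e f : n → 𝕜} (he : star e ⬝ᵥ e = 1) (hf : star f ⬝ᵥ f = 1) :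
    min (re (star e ⬝ᵥ A *ᵥ e)) (re (star f ⬝ᵥ A *ᵥ f)) ≤ (1 + ‖star e ⬝ᵥ f‖) / 2 := by
  have := hA.re_dotProduct_mulVec_add_le he hf
  rw [htr, one_re, mul_one] at this
  linarith [min_le_left (re (star e ⬝ᵥ A *ᵥ e)) (re (star f ⬝ᵥ A *ᵥ f)),
    min_le_right (re (star e ⬝ᵥ A *ᵥ e)) (re (star f ⬝ᵥ A *ᵥ f))]

theorem re_dotProduct_vecMulVec_self_star_mulVec (v e : n → 𝕜) :
    re (star e ⬝ᵥ vecMulVec v (star v) *ᵥ e) = ‖star e ⬝ᵥ v‖ ^ 2 := by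
  rw [vecMulVec_mulVec, op_smul_eq_smul, dotProduct_smul, smul_eq_mul, star_dotProduct v,
    RCLike.star_def, RCLike.conj_mul, ← ofReal_pow, ofReal_re]

theorem trace_eq_one_and_re_dotProduct_mulVec_of_eq_smul_add {e f v : n → 𝕜}
    (he : star e ⬝ᵥ e = 1) (hf : star f ⬝ᵥ f = 1) {s c : ℝ} (hef : star e ⬝ᵥ f = s)
    (hc : c ^ 2 * (2 * (1 + s)) = 1) (hv : v = (c : 𝕜) • (e + f)) :
    (vecMulVec v (star v)).trace = 1 ∧
      re (star e ⬝ᵥ vecMulVec v (star v) *ᵥ e) = (1 + s) / 2 ∧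
      re (star f ⬝ᵥ vecMulVec v (star v) *ᵥ f) = (1 + s) / 2 := by
  have hfe : star f ⬝ᵥ e = s := by rw [star_dotProduct, hef, RCLike.star_def, conj_ofReal]
  have hev : star e ⬝ᵥ v = (c * (1 + s) : ℝ) := by
    rw [hv, dotProduct_smul, dotProduct_add, he, hef, smul_eq_mul]; push_cast; ring
  have hfv : star f ⬝ᵥ v = (c * (1 + s) : ℝ) := by
    rw [hv, dotProduct_smul, dotProduct_add, hf, hfe, smul_eq_mul]; push_cast; ring
  have hvv : star v ⬝ᵥ v = 1 := by
    nth_rw 1 [hv]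
    rw [star_smul, star_add, smul_dotProduct, add_dotProduct, hev, hfv, RCLike.star_def,
      conj_ofReal, smul_eq_mul]
    norm_cast
    linear_combination hc
  have hval : ‖((c * (1 + s) : ℝ) : 𝕜)‖ ^ 2 = (1 + s) / 2 := by
    rw [norm_ofReal, sq_abs]; linear_combination (1 + s) / 2 * hc
  refine ⟨by rw [trace_vecMulVec, dotProduct_comm, hvv], ?_, ?_⟩
  · rw [re_dotProduct_vecMulVec_self_star_mulVec, hev, hval]
  · rw [re_dotProduct_vecMulVec_self_star_mulVec, hfv, hval]

open Matrix in
theorem stmt19 (d : ℕ) [NeZero d] :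
    -- `e₀` the first standard basis vector, `f₀ = ℱe₀ = d^{-1/2}∑ₙ eₙ`
    IsGreatest
      {r : ℝ | ∃ A : Matrix (Fin d) (Fin d) ℂ, A.PosSemidef ∧ A.trace = 1 ∧
        r = min ((star (Pi.single (0 : Fin d) (1 : ℂ)) ⬝ᵥ
              A.mulVec (Pi.single (0 : Fin d) (1 : ℂ))).re)
            ((star (fun _ : Fin d => ((Real.sqrt d : ℂ))⁻¹) ⬝ᵥ
              A.mulVec (fun _ : Fin d => ((Real.sqrt d : ℂ))⁻¹)).re)}
      ((1 + 1 / Real.sqrt d) / 2) ∧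
    -- the maximum is attained at `A = |v⟩⟨v|`, `v = √(√d/(2(√d+1)))·(e₀ + f₀)`
    (letI v : Fin d → ℂ := fun i =>
        ((Real.sqrt (Real.sqrt d / (2 * (Real.sqrt d + 1))) : ℝ) : ℂ) *
          ((Pi.single (0 : Fin d) (1 : ℂ) : Fin d → ℂ) i + ((Real.sqrt d : ℂ))⁻¹)
     letI A := Matrix.vecMulVec v (star v)
     A.PosSemidef ∧ A.trace = 1 ∧
      min ((star (Pi.single (0 : Fin d) (1 : ℂ)) ⬝ᵥ
            A.mulVec (Pi.single (0 : Fin d) (1 : ℂ))).re)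
          ((star (fun _ : Fin d => ((Real.sqrt d : ℂ))⁻¹) ⬝ᵥ
            A.mulVec (fun _ : Fin d => ((Real.sqrt d : ℂ))⁻¹)).re) =
        (1 + 1 / Real.sqrt d) / 2) := by
  set e₀ : Fin d → ℂ := Pi.single 0 1
  set f₀ : Fin d → ℂ := fun _ => ((√d : ℂ))⁻¹
  have hd : (0 : ℝ) < √d := Real.sqrt_pos.mpr (by exact_mod_cast Nat.pos_of_neZero d)
  have he : star e₀ ⬝ᵥ e₀ = 1 := by simp [e₀]
  have hf : star f₀ ⬝ᵥ f₀ = 1 := by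
    simp only [f₀, dotProduct, Pi.star_apply, star_inv₀, Complex.star_def, Complex.conj_ofReal,
      Finset.sum_const, Finset.card_univ, Fintype.card_fin, nsmul_eq_mul]
    rw [← mul_inv, ← Complex.ofReal_mul, Real.mul_self_sqrt d.cast_nonneg, Complex.ofReal_natCast,
      mul_inv_cancel₀ (Nat.cast_ne_zero.mpr (NeZero.ne d))]
  have hef : star e₀ ⬝ᵥ f₀ = ((√d)⁻¹ : ℝ) := by simp [e₀, f₀]
  have hc : √(√d / (2 * (√d + 1))) ^ 2 * (2 * (1 + (√d)⁻¹)) = 1 := by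
    rw [Real.sq_sqrt (by positivity)]
    field_simp
  obtain ⟨htr, hval_e, hval_f⟩ :=
    trace_eq_one_and_re_dotProduct_mulVec_of_eq_smul_add (s := (√d)⁻¹) he hf hef hc rfl
  have hval := (congrArg₂ min hval_e hval_f).trans (min_self _)
  rw [← one_div] at hval
  refine ⟨⟨⟨_, posSemidef_vecMulVec_self_star _, htr, hval.symm⟩, ?_⟩,
    posSemidef_vecMulVec_self_star _, htr, hval⟩
  rintro r ⟨A, hA, hAtr, rfl⟩
  simpa [hef, abs_of_pos hd] using hA.min_re_dotProduct_mulVec_le hAtr he hf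
end
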